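/- arXiv:2111.00597 — 13 statements merged into one kernel-verified Lean document; each statement's English description precedes it below -/
import Mathlib

section
/- Let Y be a set, f : Y → Y a map, ℓ : Y → ℝ and V : Y → ℝ functions with ℓ(y) ≥ 0 and V(y) ≥ 0 for every y ∈ Y, and let ω be a real number with 0 < ω ≤ 1 such that the relaxed dynamic programming inequality V(y) ≥ V(f(y)) + ω·ℓ(y) holds for all y ∈ Y. Then for every y ∈ Y and every n ∈ ℕ one has ω·∑_{k=0}^{n−1} ℓ(f^[k](y)) ≤ V(y), where f^[k] denotes the k-fold iterate of f; in particular the nonnegative series ∑_{k=0}^{∞} ℓ(f^[k](y)) converges and ω·∑_{k=0}^{∞} ℓ(f^[k](y)) ≤ V(y). -/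
/-- Relaxed dynamic programming estimate: if `V y ≥ V (f y) + ω * l y` for all `y`,
with `l, V ≥ 0` and `0 < ω ≤ 1`, then partial sums of the running cost along the
closed-loop trajectory are bounded by `V y / ω`, the infinite series converges, and
`ω * ∑' l(f^[k] y) ≤ V y`. -/
theorem relaxed_dynamic_programming
    {Y : Type*} (f : Y → Y) (l V : Y → ℝ) (ω : ℝ)
    (hl : ∀ y, 0 ≤ l y) (hV : ∀ y, 0 ≤ V y)
    (hω0 : 0 < ω) (hω1 : ω ≤ 1)
    (hrdp : ∀ y, V (f y) + ω * l y ≤ V y) :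
    (∀ (y : Y) (n : ℕ), ω * ∑ k ∈ Finset.range n, l (f^[k] y) ≤ V y) ∧
    (∀ y : Y, Summable (fun k : ℕ => l (f^[k] y)) ∧
      ω * ∑' k : ℕ, l (f^[k] y) ≤ V y) := by
  have key : ∀ (y : Y) (n : ℕ),
      ω * ∑ k ∈ Finset.range n, l (f^[k] y) + V (f^[n] y) ≤ V y := by
    intro y n
    induction n with
    | zero => simp
    | succ n ih =>
      rw [Finset.sum_range_succ, mul_add, Function.iterate_succ_apply']
      have := hrdp (f^[n] y)
      linarith
  have hpart : ∀ (y : Y) (n : ℕ), ω * ∑ k ∈ Finset.range n, l (f^[k] y) ≤ V y := by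
    intro y n
    have := key y n
    have := hV (f^[n] y)
    linarith
  refine ⟨hpart, fun y => ?_⟩
  have hsum : Summable (fun k : ℕ => l (f^[k] y)) := by
    apply summable_of_sum_range_le (fun k => hl _)
    intro n
    have := hpart y n
    rw [← le_div_iff₀' hω0] at this
    exact this
  refine ⟨hsum, ?_⟩
  have : ∑' k : ℕ, l (f^[k] y) ≤ V y / ω := by
    apply Summable.tsum_le_of_sum_range_le hsum
    intro n
    rw [le_div_iff₀ hω0]
    calc (∑ k ∈ Finset.range n, l (f^[k] y)) * ω
        = ω * ∑ k ∈ Finset.range n, l (f^[k] y) := by ring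
      _ ≤ V y := hpart y n
  calc ω * ∑' k : ℕ, l (f^[k] y) ≤ ω * (V y / ω) := by
        exact mul_le_mul_of_nonneg_left this hω0.le
    _ = V y := by field_simp
end

section
/- Let Y be a real normed vector space, f : Y → Y a map, ℓ : Y → ℝ and V : Y → ℝ functions with ℓ(y) ≥ 0 and V(y) ≥ 0 for all y, and ω a real number with 0 < ω ≤ 1 such that V(y) ≥ V(f(y)) + ω·ℓ(y) for all y ∈ Y. Assume moreover that there exist ȳ ∈ Y and a continuous, strictly increasing function ρ : [0,∞) → [0,∞) with ρ(0) = 0 such that ℓ(y) ≥ ρ(‖y − ȳ‖) for all y ∈ Y. Then for every initial point y₀ ∈ Y the closed-loop trajectory y_{k+1} = f(y_k) converges to ȳ, i.e. ‖f^[k](y₀) − ȳ‖ → 0 as k → ∞. -/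
/-- Attractivity conclusion of the relaxed dynamic programming stability result for MPC:
under the Lyapunov-type inequality and a class-K lower bound on the running cost,
the closed-loop trajectory converges to the desired state. -/
theorem mpc_closed_loop_attractivity
    {Y : Type*} [NormedAddCommGroup Y] [NormedSpace ℝ Y]
    (f : Y → Y) (l V : Y → ℝ) (ω : ℝ)
    (hl : ∀ y, 0 ≤ l y) (hV : ∀ y, 0 ≤ V y)
    (hω0 : 0 < ω) (hω1 : ω ≤ 1)
    (hrdp : ∀ y, V (f y) + ω * l y ≤ V y)
    (ybar : Y) (ρ : ℝ → ℝ)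
    (hρcont : ContinuousOn ρ (Set.Ici 0))
    (hρmono : StrictMonoOn ρ (Set.Ici 0))
    (hρ0 : ρ 0 = 0)
    (hρnonneg : ∀ t, 0 ≤ t → 0 ≤ ρ t)
    (hlb : ∀ y : Y, ρ ‖y - ybar‖ ≤ l y) :
    ∀ y₀ : Y, Filter.Tendsto (fun k : ℕ => ‖f^[k] y₀ - ybar‖)
      Filter.atTop (nhds 0) := by
  intro y₀
  set g : ℕ → ℝ := fun k => l (f^[k] y₀) with hg
  -- partial sums are bounded
  have hpart : ∀ n : ℕ, ∑ k ∈ Finset.range n, g k ≤ V y₀ / ω := by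
    intro n
    rw [le_div_iff₀ hω0]
    have key : ∀ n : ℕ, (∑ k ∈ Finset.range n, g k) * ω ≤ V y₀ - V (f^[n] y₀) := by
      intro n
      induction n with
      | zero => simp
      | succ m ih =>
        rw [Finset.sum_range_succ, add_mul]
        have h2 := hrdp (f^[m] y₀)
        rw [show f (f^[m] y₀) = f^[m+1] y₀ from (Function.iterate_succ_apply' f m y₀).symm] at h2
        have h3 : V (f^[m+1] y₀) + g m * ω ≤ V (f^[m] y₀) := by
          rw [mul_comm]; exact h2
        linarith
    have := key n
    have := hV (f^[n] y₀)
    linarith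
  have hsum : Summable g :=
    summable_of_sum_range_le (fun k => hl _) hpart
  have hg0 : Filter.Tendsto g Filter.atTop (nhds 0) := hsum.tendsto_atTop_zero
  -- squeeze: ρ‖y_k - ȳ‖ → 0
  have hρto0 : Filter.Tendsto (fun k : ℕ => ρ ‖f^[k] y₀ - ybar‖) Filter.atTop (nhds 0) := by
    refine squeeze_zero (fun k => hρnonneg _ (norm_nonneg _)) (fun k => hlb _) hg0
  -- conclude via strict monotonicity
  rw [Metric.tendsto_atTop]
  intro ε hε
  have hρε : 0 < ρ ε := by
    have := hρmono (Set.self_mem_Ici) (Set.mem_Ici.mpr hε.le) hε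
    rwa [hρ0] at this
  rw [Metric.tendsto_atTop] at hρto0
  obtain ⟨N, hN⟩ := hρto0 (ρ ε) hρε
  refine ⟨N, fun n hn => ?_⟩
  have h1 := hN n hn
  rw [Real.dist_eq, sub_zero, abs_of_nonneg (hρnonneg _ (norm_nonneg _))] at h1
  rw [Real.dist_eq, sub_zero, abs_of_nonneg (norm_nonneg _)]
  by_contra hcon
  push_neg at hcon
  exact absurd h1 (not_lt.mpr (hρmono.monotoneOn (Set.mem_Ici.mpr hε.le)
    (Set.mem_Ici.mpr (norm_nonneg _)) hcon))
end

section
/- Under the state error residual equations, the state optimality error satisfies the energy estimate m(e_y^K, e_y^K) + τ·∑_{k=1}^{K} a(e_y^k, e_y^k) ≤ (2τ/α)·∑_{k=1}^{K} ‖r_y^k‖_{Y'}² + (2/α)·(∑_{i=1}^{m} ‖b_i‖_{Y'}²)·τ·∑_{k=1}^{K} ‖e_u^k‖_{ℝ^m}² + m(e_y^0, e_y^0). -/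
private lemma cs_young {α x t P : ℝ} (hα : 0 < α) (hP : 0 ≤ P)
    (h : t ^ 2 ≤ P * x ^ 2) : t ≤ α / 4 * x ^ 2 + P / α := by
  rcases le_or_gt t 0 with h0 | h0
  · have : (0:ℝ) ≤ α / 4 * x ^ 2 + P / α := by positivity
    linarith
  · rw [← mul_le_mul_iff_right₀ hα]
    have hα0 : α ≠ 0 := hα.ne'
    have e : α * (α / 4 * x ^ 2 + P / α) = α ^ 2 / 4 * x ^ 2 + P := by
      field_simp
    rw [e]
    have h2 : α ^ 2 * t ^ 2 ≤ α ^ 2 * (P * x ^ 2) :=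
      mul_le_mul_of_nonneg_left h (sq_nonneg α)
    by_contra h'
    push_neg at h'
    have hS : 0 ≤ α ^ 2 / 4 * x ^ 2 + P := by positivity
    have hsq : (α ^ 2 / 4 * x ^ 2 + P) ^ 2 < (α * t) ^ 2 := by
      have := mul_self_lt_mul_self hS h'
      nlinarith [this]
    nlinarith [hsq, h2, sq_nonneg (α ^ 2 / 4 * x ^ 2 - P)]

private lemma step_arith {τ α Mx My D A T R X r2 P : ℝ}
    (hτ : 0 < τ) (hα : 0 < α)
    (hstep : Mx - My ≤ 2 * D)
    (hres : D + τ * A - τ * T = τ * R)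
    (hR : R ≤ α / 4 * X ^ 2 + r2 / α)
    (hT : T ≤ α / 4 * X ^ 2 + P / α)
    (hax : α * X ^ 2 ≤ A) :
    Mx - My + τ * A ≤ 2 * τ / α * r2 + 2 * τ / α * P := by
  have hα0 : α ≠ 0 := hα.ne'
  have h2 := mul_le_mul_of_nonneg_left hR (by positivity : (0:ℝ) ≤ 2 * τ)
  have h3 := mul_le_mul_of_nonneg_left hT (by positivity : (0:ℝ) ≤ 2 * τ)
  have h4 := mul_le_mul_of_nonneg_left hax hτ.le
  have e1 : 2 * τ * (α / 4 * X ^ 2 + r2 / α) = τ * (α * X ^ 2) / 2 + 2 * τ / α * r2 := by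
    field_simp; ring
  have e2 : 2 * τ * (α / 4 * X ^ 2 + P / α) = τ * (α * X ^ 2) / 2 + 2 * τ / α * P := by
    field_simp; ring
  linarith


set_option maxHeartbeats 1000000 in
/-- Energy estimate for the state optimality error under the state error residual
equations (Lemma on the state optimality error, first estimate). -/
theorem state_error_energy_estimate
    {Y : Type*} [NormedAddCommGroup Y] [NormedSpace ℝ Y]
    {md K : ℕ} (hK : 1 ≤ K) {τ α : ℝ} (hτ : 0 < τ) (hα : 0 < α)
    (a mm : Y →ₗ[ℝ] Y →ₗ[ℝ] ℝ)
    (ha : ∀ v : Y, α * ‖v‖ ^ 2 ≤ a v v)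
    (hmsymm : ∀ v w : Y, mm v w = mm w v)
    (hmpos : ∀ v : Y, 0 ≤ mm v v)
    (b : Fin md → Y →L[ℝ] ℝ)
    (ey : ℕ → Y) (eu : ℕ → Fin md → ℝ) (ry : ℕ → Y →L[ℝ] ℝ)
    (hres : ∀ k ∈ Finset.Icc 1 K, ∀ φ : Y,
      mm (ey k - ey (k - 1)) φ + τ * a (ey k) φ
        - τ * ∑ i, b i φ * eu k i = τ * ry k φ) :
    mm (ey K) (ey K) + τ * ∑ k ∈ Finset.Icc 1 K, a (ey k) (ey k)
      ≤ (2 * τ / α) * ∑ k ∈ Finset.Icc 1 K, ‖ry k‖ ^ 2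
        + (2 / α) * (∑ i, ‖b i‖ ^ 2) * (τ * ∑ k ∈ Finset.Icc 1 K, ∑ i, eu k i ^ 2)
        + mm (ey 0) (ey 0) := by
  set B := ∑ i, ‖b i‖ ^ 2 with hB
  have hBnn : 0 ≤ B := Finset.sum_nonneg fun i _ => sq_nonneg _
  have key : ∀ k ∈ Finset.Icc 1 K,
      mm (ey k) (ey k) - mm (ey (k-1)) (ey (k-1)) + τ * a (ey k) (ey k)
        ≤ (2*τ/α) * ‖ry k‖^2 + (2/α) * B * (τ * ∑ i, eu k i ^ 2) := by
    intro k hk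
    have hres' := hres k hk (ey k)
    set x := ey k with hx
    set y := ey (k-1) with hy
    set U := ∑ i, eu k i ^ 2 with hU
    have hUnn : 0 ≤ U := Finset.sum_nonneg fun i _ => sq_nonneg _
    -- step estimate for mm
    have hexp : mm (x - y) (x - y) = mm x x - mm x y - mm y x + mm y y := by
      simp [map_sub, LinearMap.sub_apply]; ring
    have hstep : mm x x - mm y y ≤ 2 * mm (x - y) x := by
      have hmsub : mm (x - y) x = mm x x - mm y x := by
        simp [map_sub, LinearMap.sub_apply]
      nlinarith [hmpos (x - y), hmsymm x y]
    -- bound on ry term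
    have hrY : ry k x ≤ α/4 * ‖x‖^2 + ‖ry k‖^2 / α := by
      apply cs_young hα (sq_nonneg _)
      have h := (ry k).le_opNorm x
      rw [Real.norm_eq_abs] at h
      nlinarith [abs_nonneg (ry k x), sq_abs (ry k x), norm_nonneg (ry k),
        norm_nonneg x, mul_nonneg (norm_nonneg (ry k)) (norm_nonneg x)]
    -- bound on b term via Cauchy-Schwarz
    set T := ∑ i, b i x * eu k i with hT
    have hTb : T ≤ α/4 * ‖x‖^2 + (B * U) / α := by
      apply cs_young hα (mul_nonneg hBnn hUnn)
      have hCS : T ^ 2 ≤ (∑ i, (b i x)^2) * U :=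
        Finset.sum_mul_sq_le_sq_mul_sq _ _ _
      have hbi : (∑ i, (b i x)^2) ≤ B * ‖x‖^2 := by
        rw [hB, Finset.sum_mul]
        refine Finset.sum_le_sum fun i _ => ?_
        have h := (b i).le_opNorm x
        rw [Real.norm_eq_abs] at h
        nlinarith [abs_nonneg (b i x), sq_abs (b i x),
          mul_nonneg (norm_nonneg (b i)) (norm_nonneg x)]
      nlinarith [hCS, hUnn, hbi]
    have h := step_arith hτ hα hstep hres' hrY hTb (ha x)
    calc mm x x - mm y y + τ * a x x
        ≤ 2*τ/α * ‖ry k‖^2 + 2*τ/α * (B * U) := h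
      _ = (2*τ/α) * ‖ry k‖^2 + (2/α) * B * (τ * U) := by ring
  have hsum := Finset.sum_le_sum key
  have tel : ∑ k ∈ Finset.Icc 1 K, (mm (ey k) (ey k) - mm (ey (k-1)) (ey (k-1)))
      = mm (ey K) (ey K) - mm (ey 0) (ey 0) := by
    rw [← Finset.Ico_add_one_right_eq_Icc, Finset.sum_Ico_eq_sum_range]
    have hKK : K + 1 - 1 = K := by omega
    rw [hKK]
    calc ∑ i ∈ Finset.range K, (mm (ey (1+i)) (ey (1+i)) - mm (ey (1+i-1)) (ey (1+i-1)))
        = ∑ i ∈ Finset.range K,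
            ((fun j => mm (ey j) (ey j)) (i+1) - (fun j => mm (ey j) (ey j)) i) := by
          refine Finset.sum_congr rfl fun i _ => ?_
          have h1 : 1 + i - 1 = i := by omega
          have h2 : 1 + i = i + 1 := by omega
          rw [h1, h2]
      _ = mm (ey K) (ey K) - mm (ey 0) (ey 0) := by
          simpa using Finset.sum_range_sub (fun j => mm (ey j) (ey j)) K
  rw [Finset.sum_add_distrib, tel, ← Finset.mul_sum] at hsum
  have hrhs : ∑ k ∈ Finset.Icc 1 K, ((2*τ/α) * ‖ry k‖^2 + (2/α) * B * (τ * ∑ i, eu k i ^ 2))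
      = (2 * τ / α) * ∑ k ∈ Finset.Icc 1 K, ‖ry k‖ ^ 2
        + (2 / α) * B * (τ * ∑ k ∈ Finset.Icc 1 K, ∑ i, eu k i ^ 2) := by
    have eA : ∑ k ∈ Finset.Icc 1 K, (2*τ/α) * ‖ry k‖^2
        = (2*τ/α) * ∑ k ∈ Finset.Icc 1 K, ‖ry k‖^2 := (Finset.mul_sum _ _ _).symm
    have eB : ∑ k ∈ Finset.Icc 1 K, (2/α) * B * (τ * ∑ i, eu k i ^ 2)
        = (2/α) * B * (τ * ∑ k ∈ Finset.Icc 1 K, ∑ i, eu k i ^ 2) := by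
      calc ∑ k ∈ Finset.Icc 1 K, (2/α) * B * (τ * ∑ i, eu k i ^ 2)
          = (2/α) * B * ∑ k ∈ Finset.Icc 1 K, (τ * ∑ i, eu k i ^ 2) :=
            (Finset.mul_sum _ _ _).symm
        _ = (2/α) * B * (τ * ∑ k ∈ Finset.Icc 1 K, ∑ i, eu k i ^ 2) := by
            congr 1
            exact (Finset.mul_sum _ _ _).symm
    rw [Finset.sum_add_distrib, eA, eB]
  rw [hrhs] at hsum
  linarith
end

section
/- Under the state error residual equations, the state optimality error satisfies τ·∑_{k=1}^{K} ‖e_y^k‖² ≤ (2τ/α²)·∑_{k=1}^{K} ‖r_y^k‖_{Y'}² + (2/α²)·(∑_{i=1}^{m} ‖b_i‖_{Y'}²)·τ·∑_{k=1}^{K} ‖e_u^k‖_{ℝ^m}² + m(e_y^0, e_y^0)/α. -/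
/-- Norm estimate for the state optimality error under the state error residual
equations (Lemma on the state optimality error, second estimate). -/
theorem state_error_norm_estimate
    {Y : Type*} [NormedAddCommGroup Y] [NormedSpace ℝ Y]
    {md K : ℕ} (hK : 1 ≤ K) {τ α : ℝ} (hτ : 0 < τ) (hα : 0 < α)
    (a mm : Y →ₗ[ℝ] Y →ₗ[ℝ] ℝ)
    (ha : ∀ v : Y, α * ‖v‖ ^ 2 ≤ a v v)
    (hmsymm : ∀ v w : Y, mm v w = mm w v)
    (hmpos : ∀ v : Y, 0 ≤ mm v v)
    (b : Fin md → Y →L[ℝ] ℝ)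
    (ey : ℕ → Y) (eu : ℕ → Fin md → ℝ) (ry : ℕ → Y →L[ℝ] ℝ)
    (hres : ∀ k ∈ Finset.Icc 1 K, ∀ φ : Y,
      mm (ey k - ey (k - 1)) φ + τ * a (ey k) φ
        - τ * ∑ i, b i φ * eu k i = τ * ry k φ) :
    τ * ∑ k ∈ Finset.Icc 1 K, ‖ey k‖ ^ 2
      ≤ (2 * τ / α ^ 2) * ∑ k ∈ Finset.Icc 1 K, ‖ry k‖ ^ 2
        + (2 / α ^ 2) * (∑ i, ‖b i‖ ^ 2) * (τ * ∑ k ∈ Finset.Icc 1 K, ∑ i, eu k i ^ 2)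
        + mm (ey 0) (ey 0) / α := by
  set B : ℝ := ∑ i, ‖b i‖ ^ 2 with hBdef
  have hBnn : 0 ≤ B := Finset.sum_nonneg fun i _ => by positivity
  set g : ℕ → ℝ := fun k => mm (ey k) (ey k) with hgdef
  -- key per-step estimate
  have key : ∀ k ∈ Finset.Icc 1 K,
      α ^ 2 * (τ * ‖ey k‖ ^ 2)
        ≤ 2 * τ * ‖ry k‖ ^ 2 + 2 * τ * B * (∑ i, eu k i ^ 2)
          + α * (g (k - 1) - g k) := by
    intro k hk
    have h1 := hres k hk (ey k)
    have h1' : mm (ey k) (ey k) - mm (ey (k - 1)) (ey k) + τ * a (ey k) (ey k)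
        - τ * ∑ i, b i (ey k) * eu k i = τ * ry k (ey k) := by
      simpa [map_sub, LinearMap.sub_apply] using h1
    -- positivity of mm on the difference, expanded
    have h2 : 0 ≤ mm (ey k) (ey k) - 2 * mm (ey (k - 1)) (ey k)
        + mm (ey (k - 1)) (ey (k - 1)) := by
      have h := hmpos (ey k - ey (k - 1))
      have hs := hmsymm (ey k) (ey (k - 1))
      simp only [map_sub, LinearMap.sub_apply] at h
      linarith
    have h3 := ha (ey k)
    have h4 : ry k (ey k) ≤ ‖ry k‖ * ‖ey k‖ :=
      le_trans (le_abs_self _) (by simpa using (ry k).le_opNorm (ey k))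
    set s : ℝ := ∑ i, ‖b i‖ * |eu k i| with hsdef
    have h5 : ∑ i, b i (ey k) * eu k i ≤ ‖ey k‖ * s := by
      have : ∀ i ∈ Finset.univ, b i (ey k) * eu k i ≤ ‖ey k‖ * (‖b i‖ * |eu k i|) := by
        intro i _
        have h1 : b i (ey k) * eu k i ≤ |b i (ey k)| * |eu k i| := by
          rw [← abs_mul]; exact le_abs_self _
        have h2 : |b i (ey k)| ≤ ‖b i‖ * ‖ey k‖ := by
          simpa using (b i).le_opNorm (ey k)
        nlinarith [abs_nonneg (eu k i), norm_nonneg (ey k)]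
      calc ∑ i, b i (ey k) * eu k i ≤ ∑ i, ‖ey k‖ * (‖b i‖ * |eu k i|) :=
            Finset.sum_le_sum this
        _ = ‖ey k‖ * s := by rw [hsdef, Finset.mul_sum]
    have h6 : s ^ 2 ≤ B * (∑ i, eu k i ^ 2) := by
      have hcs := Finset.sum_mul_sq_le_sq_mul_sq Finset.univ
        (fun i => ‖b i‖) (fun i => |eu k i|)
      simpa [sq_abs] using hcs
    have hy1 : 2 * α * (‖ry k‖ * ‖ey k‖) ≤ 2 * ‖ry k‖ ^ 2 + α ^ 2 / 2 * ‖ey k‖ ^ 2 := by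
      nlinarith [sq_nonneg (2 * ‖ry k‖ - α * ‖ey k‖)]
    have hy2 : 2 * α * (‖ey k‖ * s) ≤ 2 * B * (∑ i, eu k i ^ 2) + α ^ 2 / 2 * ‖ey k‖ ^ 2 := by
      nlinarith [sq_nonneg (2 * s - α * ‖ey k‖), h6]
    have H : 2 * α * mm (ey k) (ey k) - 2 * α * mm (ey (k - 1)) (ey k)
        + 2 * α * τ * a (ey k) (ey k) - 2 * α * τ * ∑ i, b i (ey k) * eu k i
        = 2 * α * τ * ry k (ey k) := by linear_combination (2 * α) * h1'
    have Ha : 2 * α * τ * (α * ‖ey k‖ ^ 2) ≤ 2 * α * τ * a (ey k) (ey k) :=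
      mul_le_mul_of_nonneg_left h3 (by positivity)
    have Hr : 2 * α * τ * ry k (ey k) ≤ 2 * α * τ * (‖ry k‖ * ‖ey k‖) :=
      mul_le_mul_of_nonneg_left h4 (by positivity)
    have Hb : 2 * α * τ * (∑ i, b i (ey k) * eu k i) ≤ 2 * α * τ * (‖ey k‖ * s) :=
      mul_le_mul_of_nonneg_left h5 (by positivity)
    have Hy1 : τ * (2 * α * (‖ry k‖ * ‖ey k‖))
        ≤ τ * (2 * ‖ry k‖ ^ 2 + α ^ 2 / 2 * ‖ey k‖ ^ 2) :=
      mul_le_mul_of_nonneg_left hy1 hτ.le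
    have Hy2 : τ * (2 * α * (‖ey k‖ * s))
        ≤ τ * (2 * B * (∑ i, eu k i ^ 2) + α ^ 2 / 2 * ‖ey k‖ ^ 2) :=
      mul_le_mul_of_nonneg_left hy2 hτ.le
    have Hm : α * (2 * mm (ey (k - 1)) (ey k))
        ≤ α * (mm (ey k) (ey k) + mm (ey (k - 1)) (ey (k - 1))) :=
      mul_le_mul_of_nonneg_left (by linarith) hα.le
    have hg1 : g (k - 1) = mm (ey (k - 1)) (ey (k - 1)) := rfl
    have hg2 : g k = mm (ey k) (ey k) := rfl
    linarith [Ha, Hr, Hb, Hy1, Hy2, Hm, H]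
  -- telescoping sum
  have htel : ∀ n : ℕ, ∑ k ∈ Finset.Icc 1 n, (g (k - 1) - g k) = g 0 - g n := by
    intro n
    induction n with
    | zero => simp
    | succ n ih =>
      rw [Finset.sum_Icc_succ_top (by omega : 1 ≤ n + 1), ih]
      simp only [Nat.add_sub_cancel]
      ring
  have hsum := Finset.sum_le_sum key
  have hL : ∑ k ∈ Finset.Icc 1 K, α ^ 2 * (τ * ‖ey k‖ ^ 2)
      = α ^ 2 * (τ * ∑ k ∈ Finset.Icc 1 K, ‖ey k‖ ^ 2) := by
    rw [Finset.mul_sum, Finset.mul_sum]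
  have hR : ∑ k ∈ Finset.Icc 1 K,
      (2 * τ * ‖ry k‖ ^ 2 + 2 * τ * B * (∑ i, eu k i ^ 2) + α * (g (k - 1) - g k))
      = 2 * τ * (∑ k ∈ Finset.Icc 1 K, ‖ry k‖ ^ 2)
        + 2 * τ * B * (∑ k ∈ Finset.Icc 1 K, ∑ i, eu k i ^ 2)
        + α * (g 0 - g K) := by
    rw [Finset.sum_add_distrib, Finset.sum_add_distrib, ← Finset.mul_sum, ← Finset.mul_sum,
      ← Finset.mul_sum, htel K]
  rw [hL, hR] at hsum
  have hgK : 0 ≤ g K := hmpos _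
  have main : α ^ 2 * (τ * ∑ k ∈ Finset.Icc 1 K, ‖ey k‖ ^ 2)
      ≤ 2 * τ * (∑ k ∈ Finset.Icc 1 K, ‖ry k‖ ^ 2)
        + 2 * τ * B * (∑ k ∈ Finset.Icc 1 K, ∑ i, eu k i ^ 2)
        + α * g 0 := by linarith [mul_nonneg hα.le hgK]
  have hα2 : (0 : ℝ) < α ^ 2 := by positivity
  have hstep : τ * ∑ k ∈ Finset.Icc 1 K, ‖ey k‖ ^ 2
      ≤ (2 * τ * (∑ k ∈ Finset.Icc 1 K, ‖ry k‖ ^ 2)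
          + 2 * τ * B * (∑ k ∈ Finset.Icc 1 K, ∑ i, eu k i ^ 2)
          + α * g 0) / α ^ 2 := by
    rw [le_div_iff₀ hα2]
    linarith [main]
  have heq : (2 * τ * (∑ k ∈ Finset.Icc 1 K, ‖ry k‖ ^ 2)
        + 2 * τ * B * (∑ k ∈ Finset.Icc 1 K, ∑ i, eu k i ^ 2)
        + α * g 0) / α ^ 2
      = (2 * τ / α ^ 2) * ∑ k ∈ Finset.Icc 1 K, ‖ry k‖ ^ 2
        + (2 / α ^ 2) * B * (τ * ∑ k ∈ Finset.Icc 1 K, ∑ i, eu k i ^ 2)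
        + g 0 / α := by
    field_simp
  rw [heq] at hstep
  exact hstep
end

section
/- Under the adjoint error residual equations, the adjoint optimality error satisfies the energy estimate m(e_p^1, e_p^1) + τ·∑_{k=1}^{K} a(e_p^k, e_p^k) ≤ (2τ/α)·∑_{k=1}^{K} ‖r_p^k‖_{Y'}² + (2 C_D² σ₁² τ/α)·∑_{k=1}^{K} (e_y^k, e_y^k)_D + σ₂²·(e_y^K, e_y^K)_D. -/
private lemma aux_young (x P Q : ℝ) (hP : 0 ≤ P) (hQ : 0 ≤ Q) (h : x ^ 2 ≤ 4 * P * Q) :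
    x ≤ P + Q := by
  nlinarith [sq_nonneg (P - Q), sq_nonneg (P + Q)]

private lemma bilin_cs {Y : Type*} [AddCommGroup Y] [Module ℝ Y]
    (D : Y →ₗ[ℝ] Y →ₗ[ℝ] ℝ) (hsymm : ∀ v w, D v w = D w v)
    (hpos : ∀ v, 0 ≤ D v v) (v w : Y) : (D v w) ^ 2 ≤ D v v * D w w := by
  have key : ∀ t : ℝ, 0 ≤ D w w * (t * t) + (2 * D v w) * t + D v v := by
    intro t
    have h0 := hpos (v + t • w)
    simp only [map_add, map_smul, LinearMap.add_apply, LinearMap.smul_apply,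
      smul_eq_mul] at h0
    have he : D w w * (t * t) + (2 * D v w) * t + D v v
        = D v v + t * D w v + t * (D v w + t * D w w) := by
      rw [hsymm w v]; ring
    rw [he]; exact h0
  have hd := discrim_le_zero key
  rw [discrim] at hd
  nlinarith

private lemma bilin_two_mul {Y : Type*} [AddCommGroup Y] [Module ℝ Y]
    (mm : Y →ₗ[ℝ] Y →ₗ[ℝ] ℝ) (hsymm : ∀ v w, mm v w = mm w v)
    (hpos : ∀ v, 0 ≤ mm v v) (v w : Y) : 2 * mm v w ≤ mm v v + mm w w := by
  have h0 := hpos (v - w)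
  simp only [map_sub, LinearMap.sub_apply] at h0
  have := hsymm w v
  linarith

set_option maxHeartbeats 1000000 in
/-- Energy estimate for the adjoint optimality error under the adjoint error residual
equations (Lemma on the adjoint optimality error, first estimate). -/
theorem adjoint_error_energy_estimate
    {Y : Type*} [NormedAddCommGroup Y] [NormedSpace ℝ Y]
    {K : ℕ} (hK : 1 ≤ K) {τ α : ℝ} (hτ : 0 < τ) (hα : 0 < α)
    (a mm D : Y →ₗ[ℝ] Y →ₗ[ℝ] ℝ)
    (ha : ∀ v : Y, α * ‖v‖ ^ 2 ≤ a v v)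
    (hmsymm : ∀ v w : Y, mm v w = mm w v)
    (hmpos : ∀ v : Y, 0 ≤ mm v v)
    (hDsymm : ∀ v w : Y, D v w = D w v)
    (hDpos : ∀ v : Y, 0 ≤ D v v)
    (hDm : ∀ v : Y, D v v ≤ mm v v)
    {CD σ1 σ2 : ℝ} (hCD : 0 ≤ CD) (hσ1 : 0 ≤ σ1) (hσ2 : 0 ≤ σ2)
    (hDC : ∀ v : Y, D v v ≤ CD ^ 2 * ‖v‖ ^ 2)
    (ey ep : ℕ → Y) (rp : ℕ → Y →L[ℝ] ℝ)
    (hres : ∀ k ∈ Finset.Icc 1 (K - 1), ∀ φ : Y,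
      mm φ (ep k - ep (k + 1)) + τ * a φ (ep k) + τ * σ1 * D (ey k) φ = τ * rp k φ)
    (hresK : ∀ φ : Y,
      mm φ (ep K) + τ * a φ (ep K) + (τ * σ1 + σ2) * D (ey K) φ = τ * rp K φ) :
    mm (ep 1) (ep 1) + τ * ∑ k ∈ Finset.Icc 1 K, a (ep k) (ep k)
      ≤ (2 * τ / α) * ∑ k ∈ Finset.Icc 1 K, ‖rp k‖ ^ 2
        + (2 * CD ^ 2 * σ1 ^ 2 * τ / α) * ∑ k ∈ Finset.Icc 1 K, D (ey k) (ey k)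
        + σ2 ^ 2 * D (ey K) (ey K) := by
  obtain ⟨n, rfl⟩ : ∃ n, K = n + 1 := ⟨K - 1, by omega⟩
  simp only [Nat.add_sub_cancel] at hres
  set F : ℕ → ℝ := fun k => mm (ep k) (ep k) with hF
  -- per-step estimate for k = 1, ..., n
  have hstep : ∀ k ∈ Finset.Icc 1 n,
      (1/2) * (F k - F (k+1)) + (τ/2) * a (ep k) (ep k)
        ≤ (τ/α) * ‖rp k‖ ^ 2 + (CD^2 * σ1^2 * τ/α) * D (ey k) (ey k) := by
    intro k hk
    have heq := hres k hk (ep k)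
    simp only [map_sub] at heq
    have h1 : (rp k) (ep k) ≤ ‖rp k‖ * ‖ep k‖ :=
      le_trans (le_abs_self _) (by simpa using (rp k).le_opNorm (ep k))
    have h2 : ‖rp k‖ * ‖ep k‖ ≤ ‖rp k‖^2 / α + (α/4) * ‖ep k‖^2 := by
      apply aux_young
      · positivity
      · positivity
      · have he : 4 * (‖rp k‖^2 / α) * ((α/4) * ‖ep k‖^2) = (‖rp k‖ * ‖ep k‖)^2 := by
          field_simp
        exact le_of_eq he.symm
    have h3 : -(σ1 * D (ey k) (ep k))
        ≤ (CD^2 * σ1^2 / α) * D (ey k) (ey k) + (α/4) * ‖ep k‖^2 := by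
      apply aux_young
      · exact mul_nonneg (by positivity) (hDpos _)
      · positivity
      · have hcs := bilin_cs D hDsymm hDpos (ey k) (ep k)
        have hdc := hDC (ep k)
        have h4pq : 4 * ((CD^2 * σ1^2 / α) * D (ey k) (ey k)) * ((α/4) * ‖ep k‖^2)
            = CD^2 * σ1^2 * D (ey k) (ey k) * ‖ep k‖^2 := by field_simp
        rw [h4pq]
        nlinarith [mul_le_mul_of_nonneg_left hcs (sq_nonneg σ1),
          mul_le_mul_of_nonneg_left hdc (mul_nonneg (sq_nonneg σ1) (hDpos (ey k)))]
    have h5 := bilin_two_mul mm hmsymm hmpos (ep k) (ep (k+1))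
    have h6 := ha (ep k)
    have h1' := mul_le_mul_of_nonneg_left h1 hτ.le
    have h2' := mul_le_mul_of_nonneg_left h2 hτ.le
    have h3' := mul_le_mul_of_nonneg_left h3 hτ.le
    have h6' := mul_le_mul_of_nonneg_left h6 hτ.le
    simp only [hF]
    ring_nf at heq h1' h2' h3' h5 h6' ⊢
    linarith
  -- estimate for k = K = n + 1
  have hstepK : (1/2) * F (n+1) + (τ/2) * a (ep (n+1)) (ep (n+1))
      ≤ (τ/α) * ‖rp (n+1)‖ ^ 2 + (CD^2 * σ1^2 * τ/α) * D (ey (n+1)) (ey (n+1))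
        + (σ2^2/2) * D (ey (n+1)) (ey (n+1)) := by
    have heq := hresK (ep (n+1))
    have h1 : (rp (n+1)) (ep (n+1)) ≤ ‖rp (n+1)‖ * ‖ep (n+1)‖ :=
      le_trans (le_abs_self _) (by simpa using (rp (n+1)).le_opNorm (ep (n+1)))
    have h2 : ‖rp (n+1)‖ * ‖ep (n+1)‖ ≤ ‖rp (n+1)‖^2 / α + (α/4) * ‖ep (n+1)‖^2 := by
      apply aux_young
      · positivity
      · positivity
      · have he : 4 * (‖rp (n+1)‖^2 / α) * ((α/4) * ‖ep (n+1)‖^2)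
            = (‖rp (n+1)‖ * ‖ep (n+1)‖)^2 := by field_simp
        exact le_of_eq he.symm
    have h3 : -(σ1 * D (ey (n+1)) (ep (n+1)))
        ≤ (CD^2 * σ1^2 / α) * D (ey (n+1)) (ey (n+1)) + (α/4) * ‖ep (n+1)‖^2 := by
      apply aux_young
      · exact mul_nonneg (by positivity) (hDpos _)
      · positivity
      · have hcs := bilin_cs D hDsymm hDpos (ey (n+1)) (ep (n+1))
        have hdc := hDC (ep (n+1))
        have h4pq : 4 * ((CD^2 * σ1^2 / α) * D (ey (n+1)) (ey (n+1)))
              * ((α/4) * ‖ep (n+1)‖^2)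
            = CD^2 * σ1^2 * D (ey (n+1)) (ey (n+1)) * ‖ep (n+1)‖^2 := by field_simp
        rw [h4pq]
        nlinarith [mul_le_mul_of_nonneg_left hcs (sq_nonneg σ1),
          mul_le_mul_of_nonneg_left hdc (mul_nonneg (sq_nonneg σ1) (hDpos (ey (n+1))))]
    have h7 : -(σ2 * D (ey (n+1)) (ep (n+1)))
        ≤ (σ2^2/2) * D (ey (n+1)) (ey (n+1)) + (1/2) * D (ep (n+1)) (ep (n+1)) := by
      apply aux_young
      · exact mul_nonneg (by positivity) (hDpos _)
      · exact mul_nonneg (by norm_num) (hDpos _)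
      · have hcs := bilin_cs D hDsymm hDpos (ey (n+1)) (ep (n+1))
        nlinarith [mul_le_mul_of_nonneg_left hcs (sq_nonneg σ2)]
    have h8 := hDm (ep (n+1))
    have h6 := ha (ep (n+1))
    have h1' := mul_le_mul_of_nonneg_left h1 hτ.le
    have h2' := mul_le_mul_of_nonneg_left h2 hτ.le
    have h3' := mul_le_mul_of_nonneg_left h3 hτ.le
    have h6' := mul_le_mul_of_nonneg_left h6 hτ.le
    simp only [hF]
    ring_nf at heq h1' h2' h3' h6' h7 h8 ⊢
    linarith
  -- sum the per-step estimates and telescope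
  have hsum := Finset.sum_le_sum hstep
  have htel : ∀ m : ℕ, ∑ k ∈ Finset.Icc 1 m, (F k - F (k+1)) = F 1 - F (m+1) := by
    intro m
    induction m with
    | zero => simp
    | succ m ih => rw [Finset.sum_Icc_succ_top (by omega : 1 ≤ m + 1), ih]; ring
  rw [Finset.sum_add_distrib, Finset.sum_add_distrib, ← Finset.mul_sum, ← Finset.mul_sum,
    ← Finset.mul_sum, ← Finset.mul_sum, htel n] at hsum
  have hsplit : ∀ g : ℕ → ℝ, ∑ k ∈ Finset.Icc 1 (n+1), g k
      = ∑ k ∈ Finset.Icc 1 n, g k + g (n+1) :=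
    fun g => Finset.sum_Icc_succ_top (by omega) g
  rw [hsplit (fun k => a (ep k) (ep k)), hsplit (fun k => ‖rp k‖ ^ 2),
    hsplit (fun k => D (ey k) (ey k))]
  have hDy := hDpos (ey (n+1))
  have hF1 : mm (ep 1) (ep 1) = F 1 := rfl
  rw [hF1]
  simp only [hF] at hsum hstepK
  ring_nf at hsum hstepK ⊢
  linarith [hDpos (ey (n+1))]
end

section
/- Under the adjoint error residual equations, the adjoint optimality error satisfies τ·∑_{k=1}^{K} ‖e_p^k‖² ≤ (2τ/α²)·∑_{k=1}^{K} ‖r_p^k‖_{Y'}² + (2 C_D² σ₁² τ/α²)·∑_{k=1}^{K} (e_y^k, e_y^k)_D + (σ₂²/α)·(e_y^K, e_y^K)_D. -/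
/-!
Testing the `k`-th residual equation with `φ = e_p^k`, coercivity of `a` controls `τ α ‖e_p^k‖²`,
and the residual and coupling terms are absorbed by Young's inequality, using Cauchy–Schwarz for
`(·,·)_D` together with `(v,v)_D ≤ C_D² ‖v‖²`. Since `m` is positive semidefinite,
`2 m(e_p^k, e_p^k - e_p^{k+1}) ≥ m(e_p^k, e_p^k) - m(e_p^{k+1}, e_p^{k+1})`, so the mass terms
telescope over `k` down to `m(e_p^1, e_p^1) ≥ 0`; in the last step the extra `σ₂` coupling is
absorbed by `(e_p^K, e_p^K)_D ≤ m(e_p^K, e_p^K)`.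
-/

open Finset

lemma abs_le_add_of_sq_le_four_mul {A B X : ℝ} (hA : 0 ≤ A) (hB : 0 ≤ B)
    (h : X ^ 2 ≤ 4 * A * B) : |X| ≤ A + B :=
  abs_le_of_sq_le_sq (h.trans (four_mul_le_sq_add A B)) (add_nonneg hA hB)

namespace LinearMap.IsPosSemidef

variable {𝕜 M : Type*} [Field 𝕜] [LinearOrder 𝕜] [IsStrictOrderedRing 𝕜]
  [AddCommGroup M] [Module 𝕜 M] {B : M →ₗ[𝕜] M →ₗ[𝕜] 𝕜}

lemma apply_sq_le_mul (hB : B.IsPosSemidef) (x y : M) : B x y ^ 2 ≤ B x x * B y y := by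
  have hquad : ∀ t : 𝕜, 0 ≤ B x x * (t * t) + 2 * B x y * t + B y y := fun t ↦ by
    have := hB.isNonneg.nonneg (t • x + y)
    simp only [map_add, map_smul, LinearMap.add_apply, LinearMap.smul_apply, smul_eq_mul,
      ← hB.isSymm.eq x y, RingHom.id_apply] at this
    linarith
  have := discrim_le_zero hquad
  rw [discrim] at this
  linarith

lemma apply_self_sub_apply_self_le (hB : B.IsPosSemidef) (x y : M) :
    B x x - B y y ≤ 2 * B x (x - y) := by
  have := hB.isNonneg.nonneg (x - y)
  simp only [map_sub, LinearMap.sub_apply, ← hB.isSymm.eq x y, RingHom.id_apply] at this ⊢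
  linarith

lemma neg_mul_apply_le (hB : B.IsPosSemidef) (c : 𝕜) (x y : M) :
    -(c * B x y) ≤ c ^ 2 / 2 * B x x + B y y / 2 := by
  have := hB.isNonneg.nonneg (c • x + y)
  simp only [map_add, map_smul, LinearMap.add_apply, LinearMap.smul_apply, smul_eq_mul,
    ← hB.isSymm.eq x y, RingHom.id_apply] at this
  linarith

end LinearMap.IsPosSemidef

lemma add_sum_le_add_sum_of_steps {M x y : ℕ → ℝ} (n : ℕ)
    (hstep : ∀ k ∈ Icc 1 n, M k - M (k + 1) + x k ≤ y k) :
    M 1 + ∑ k ∈ Icc 1 n, x k ≤ M (n + 1) + ∑ k ∈ Icc 1 n, y k := by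
  induction n with
  | zero => simp
  | succ n ih =>
    have hlast := hstep (n + 1) (by simp)
    have := ih fun k hk ↦ hstep k (Icc_subset_Icc_right n.le_succ hk)
    rw [sum_Icc_succ_top (by omega), sum_Icc_succ_top (by omega)]
    linarith

lemma sum_le_sum_add_of_steps {M x y : ℕ → ℝ} {K : ℕ} {c : ℝ} (hK : 1 ≤ K) (hM : 0 ≤ M 1)
    (hstep : ∀ k ∈ Icc 1 (K - 1), M k - M (k + 1) + x k ≤ y k)
    (hlast : M K + x K ≤ y K + c) :
    ∑ k ∈ Icc 1 K, x k ≤ ∑ k ∈ Icc 1 K, y k + c := by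
  obtain ⟨n, rfl⟩ : ∃ n, K = n + 1 := ⟨K - 1, by omega⟩
  have := add_sum_le_add_sum_of_steps n hstep
  rw [sum_Icc_succ_top (by omega), sum_Icc_succ_top (by omega)]
  linarith

section Step

variable {Y : Type*} [NormedAddCommGroup Y] [NormedSpace ℝ Y] {α τ σ CD : ℝ}
  {a D : Y →ₗ[ℝ] Y →ₗ[ℝ] ℝ}

lemma ContinuousLinearMap.apply_le_opNorm_sq_div_add (r : Y →L[ℝ] ℝ) (hα : 0 < α) (v : Y) :
    r v ≤ ‖r‖ ^ 2 / α + α / 4 * ‖v‖ ^ 2 := by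
  refine (le_abs_self _).trans (abs_le_add_of_sq_le_four_mul (by positivity) (by positivity) ?_)
  calc r v ^ 2 = |r v| ^ 2 := (sq_abs _).symm
    _ ≤ (‖r‖ * ‖v‖) ^ 2 := pow_le_pow_left₀ (abs_nonneg _) (r.le_opNorm v) 2
    _ = 4 * (‖r‖ ^ 2 / α) * (α / 4 * ‖v‖ ^ 2) := by field_simp

lemma LinearMap.IsPosSemidef.neg_mul_apply_le_of_le_norm_sq (hD : D.IsPosSemidef)
    (hDC : ∀ v, D v v ≤ CD ^ 2 * ‖v‖ ^ 2) (hα : 0 < α) (c : ℝ) (u v : Y) :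
    -(c * D u v) ≤ c ^ 2 * CD ^ 2 / α * D u u + α / 4 * ‖v‖ ^ 2 := by
  have hu := hD.isNonneg.nonneg u
  refine (neg_le_abs _).trans (abs_le_add_of_sq_le_four_mul (by positivity) (by positivity) ?_)
  calc (c * D u v) ^ 2 = c ^ 2 * D u v ^ 2 := by ring
    _ ≤ c ^ 2 * (D u u * (CD ^ 2 * ‖v‖ ^ 2)) := by
      gcongr
      exact (hD.apply_sq_le_mul u v).trans (mul_le_mul_of_nonneg_left (hDC v) hu)
    _ = 4 * (c ^ 2 * CD ^ 2 / α * D u u) * (α / 4 * ‖v‖ ^ 2) := by field_simp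

lemma coercive_bound (ha : ∀ v, α * ‖v‖ ^ 2 ≤ a v v) (hD : D.IsPosSemidef)
    (hDC : ∀ v, D v v ≤ CD ^ 2 * ‖v‖ ^ 2) (hα : 0 < α) (e y : Y) (r : Y →L[ℝ] ℝ) :
    α / 2 * ‖e‖ ^ 2 ≤ a e e + σ * D y e - r e + ‖r‖ ^ 2 / α + σ ^ 2 * CD ^ 2 / α * D y y := by
  linarith [ha e, r.apply_le_opNorm_sq_div_add hα e,
    hD.neg_mul_apply_le_of_le_norm_sq hDC hα σ y e]

lemma energy_step {m : Y →ₗ[ℝ] Y →ₗ[ℝ] ℝ} (ha : ∀ v, α * ‖v‖ ^ 2 ≤ a v v)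
    (hm : m.IsPosSemidef) (hD : D.IsPosSemidef) (hDC : ∀ v, D v v ≤ CD ^ 2 * ‖v‖ ^ 2)
    (hα : 0 < α) (hτ : 0 ≤ τ) {e e' y : Y} {r : Y →L[ℝ] ℝ}
    (h : m e (e - e') + τ * a e e + τ * σ * D y e = τ * r e) :
    m e e - m e' e' + τ * α * ‖e‖ ^ 2
      ≤ 2 * τ / α * ‖r‖ ^ 2 + 2 * τ * σ ^ 2 * CD ^ 2 / α * D y y := by
  have hcoer := mul_le_mul_of_nonneg_left (coercive_bound (σ := σ) ha hD hDC hα e y r) hτ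
  linear_combination 2 * hcoer + hm.apply_self_sub_apply_self_le e e' + 2 * h

lemma energy_last_step {m : Y →ₗ[ℝ] Y →ₗ[ℝ] ℝ} (ha : ∀ v, α * ‖v‖ ^ 2 ≤ a v v)
    (hD : D.IsPosSemidef) (hDm : ∀ v, D v v ≤ m v v) (hDC : ∀ v, D v v ≤ CD ^ 2 * ‖v‖ ^ 2)
    (hα : 0 < α) (hτ : 0 ≤ τ) {σ' : ℝ} {e y : Y} {r : Y →L[ℝ] ℝ}
    (h : m e e + τ * a e e + (τ * σ + σ') * D y e = τ * r e) :
    m e e + τ * α * ‖e‖ ^ 2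
      ≤ 2 * τ / α * ‖r‖ ^ 2 + 2 * τ * σ ^ 2 * CD ^ 2 / α * D y y + σ' ^ 2 * D y y := by
  have hcoer := mul_le_mul_of_nonneg_left (coercive_bound (σ := σ) ha hD hDC hα e y r) hτ
  linear_combination 2 * hcoer + 2 * h + 2 * hD.neg_mul_apply_le σ' y e + hDm e

end Step

theorem adjoint_error_norm_estimate_general
    {Y : Type*} [NormedAddCommGroup Y] [NormedSpace ℝ Y]
    {K : ℕ} (hK : 1 ≤ K) {τ α : ℝ} (hτ : 0 < τ) (hα : 0 < α)
    (a mm D : Y →ₗ[ℝ] Y →ₗ[ℝ] ℝ)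
    (ha : ∀ v : Y, α * ‖v‖ ^ 2 ≤ a v v)
    (hmsymm : ∀ v w : Y, mm v w = mm w v)
    (hmpos : ∀ v : Y, 0 ≤ mm v v)
    (hDsymm : ∀ v w : Y, D v w = D w v)
    (hDpos : ∀ v : Y, 0 ≤ D v v)
    (hDm : ∀ v : Y, D v v ≤ mm v v)
    {CD σ1 σ2 : ℝ}
    (hDC : ∀ v : Y, D v v ≤ CD ^ 2 * ‖v‖ ^ 2)
    (ey ep : ℕ → Y) (rp : ℕ → Y →L[ℝ] ℝ)
    (hres : ∀ k ∈ Finset.Icc 1 (K - 1), ∀ φ : Y,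
      mm φ (ep k - ep (k + 1)) + τ * a φ (ep k) + τ * σ1 * D (ey k) φ = τ * rp k φ)
    (hresK : ∀ φ : Y,
      mm φ (ep K) + τ * a φ (ep K) + (τ * σ1 + σ2) * D (ey K) φ = τ * rp K φ) :
    τ * ∑ k ∈ Finset.Icc 1 K, ‖ep k‖ ^ 2
      ≤ (2 * τ / α ^ 2) * ∑ k ∈ Finset.Icc 1 K, ‖rp k‖ ^ 2
        + (2 * CD ^ 2 * σ1 ^ 2 * τ / α ^ 2) * ∑ k ∈ Finset.Icc 1 K, D (ey k) (ey k)
        + (σ2 ^ 2 / α) * D (ey K) (ey K) := by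
  have hm : mm.IsPosSemidef := ⟨⟨hmsymm⟩, ⟨hmpos⟩⟩
  have hD : D.IsPosSemidef := ⟨⟨hDsymm⟩, ⟨hDpos⟩⟩
  have hsum := sum_le_sum_add_of_steps (M := fun k ↦ mm (ep k) (ep k))
    (x := fun k ↦ τ * α * ‖ep k‖ ^ 2)
    (y := fun k ↦ 2 * τ / α * ‖rp k‖ ^ 2 + 2 * τ * σ1 ^ 2 * CD ^ 2 / α * D (ey k) (ey k))
    hK (hmpos _) (fun k hk ↦ energy_step ha hm hD hDC hα hτ.le (hres k hk (ep k)))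
    (energy_last_step ha hD hDm hDC hα hτ.le (hresK (ep K)))
  simp only [sum_add_distrib, ← mul_sum] at hsum
  refine le_of_mul_le_mul_left ?_ hα
  calc α * (τ * ∑ k ∈ Icc 1 K, ‖ep k‖ ^ 2) = τ * α * ∑ k ∈ Icc 1 K, ‖ep k‖ ^ 2 := by ring
    _ ≤ _ := hsum
    _ = _ := by field_simp

/-- Norm estimate for the adjoint optimality error under the adjoint error residual
equations (Lemma on the adjoint optimality error, second estimate). -/
theorem adjoint_error_norm_estimate
    {Y : Type*} [NormedAddCommGroup Y] [NormedSpace ℝ Y]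
    {K : ℕ} (hK : 1 ≤ K) {τ α : ℝ} (hτ : 0 < τ) (hα : 0 < α)
    (a mm D : Y →ₗ[ℝ] Y →ₗ[ℝ] ℝ)
    (ha : ∀ v : Y, α * ‖v‖ ^ 2 ≤ a v v)
    (hmsymm : ∀ v w : Y, mm v w = mm w v)
    (hmpos : ∀ v : Y, 0 ≤ mm v v)
    (hDsymm : ∀ v w : Y, D v w = D w v)
    (hDpos : ∀ v : Y, 0 ≤ D v v)
    (hDm : ∀ v : Y, D v v ≤ mm v v)
    {CD σ1 σ2 : ℝ} (hCD : 0 ≤ CD) (hσ1 : 0 ≤ σ1) (hσ2 : 0 ≤ σ2)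
    (hDC : ∀ v : Y, D v v ≤ CD ^ 2 * ‖v‖ ^ 2)
    (ey ep : ℕ → Y) (rp : ℕ → Y →L[ℝ] ℝ)
    (hres : ∀ k ∈ Finset.Icc 1 (K - 1), ∀ φ : Y,
      mm φ (ep k - ep (k + 1)) + τ * a φ (ep k) + τ * σ1 * D (ey k) φ = τ * rp k φ)
    (hresK : ∀ φ : Y,
      mm φ (ep K) + τ * a φ (ep K) + (τ * σ1 + σ2) * D (ey K) φ = τ * rp K φ) :
    τ * ∑ k ∈ Finset.Icc 1 K, ‖ep k‖ ^ 2
      ≤ (2 * τ / α ^ 2) * ∑ k ∈ Finset.Icc 1 K, ‖rp k‖ ^ 2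
        + (2 * CD ^ 2 * σ1 ^ 2 * τ / α ^ 2) * ∑ k ∈ Finset.Icc 1 K, D (ey k) (ey k)
        + (σ2 ^ 2 / α) * D (ey K) (ey K) :=
  adjoint_error_norm_estimate_general hK hτ hα a mm D ha hmsymm hmpos hDsymm hDpos hDm hDC ey ep rp
    hres hresK
end

section
/- Under the state error residual equations, the adjoint error residual equations, and the optimality-condition inequality, the combined errors satisfy λ·τ·∑_{k=1}^{K} ‖e_u^k‖_{ℝ^m}² + σ₁·τ·∑_{k=1}^{K} (e_y^k, e_y^k)_D + σ₂·(e_y^K, e_y^K)_D ≤ τ·∑_{k=1}^{K} r_p^k(e_y^k) − τ·∑_{k=1}^{K} r_y^k(e_p^k) − m(e_y^0, e_p^1). -/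
/-- Combined estimate for state, adjoint and control errors under the state and
adjoint error residual equations and the optimality-condition inequality. -/
theorem combined_error_estimate
    {Y : Type*} [NormedAddCommGroup Y] [NormedSpace ℝ Y]
    {md K : ℕ} (hK : 1 ≤ K) {τ α : ℝ} (hτ : 0 < τ) (hα : 0 < α)
    (a mm D : Y →ₗ[ℝ] Y →ₗ[ℝ] ℝ)
    (ha : ∀ v : Y, α * ‖v‖ ^ 2 ≤ a v v)
    (hmsymm : ∀ v w : Y, mm v w = mm w v)
    (hmpos : ∀ v : Y, 0 ≤ mm v v)
    (hDsymm : ∀ v w : Y, D v w = D w v)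
    (hDpos : ∀ v : Y, 0 ≤ D v v)
    (hDm : ∀ v : Y, D v v ≤ mm v v)
    {CD σ1 σ2 lam : ℝ} (hCD : 0 ≤ CD) (hσ1 : 0 ≤ σ1) (hσ2 : 0 ≤ σ2) (hlam : 0 < lam)
    (hDC : ∀ v : Y, D v v ≤ CD ^ 2 * ‖v‖ ^ 2)
    (b : Fin md → Y →L[ℝ] ℝ)
    (ey ep : ℕ → Y) (eu : ℕ → Fin md → ℝ)
    (ry rp : ℕ → Y →L[ℝ] ℝ)
    (hresy : ∀ k ∈ Finset.Icc 1 K, ∀ φ : Y,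
      mm (ey k - ey (k - 1)) φ + τ * a (ey k) φ
        - τ * ∑ i, b i φ * eu k i = τ * ry k φ)
    (hresp : ∀ k ∈ Finset.Icc 1 (K - 1), ∀ φ : Y,
      mm φ (ep k - ep (k + 1)) + τ * a φ (ep k) + τ * σ1 * D (ey k) φ = τ * rp k φ)
    (hrespK : ∀ φ : Y,
      mm φ (ep K) + τ * a φ (ep K) + (τ * σ1 + σ2) * D (ey K) φ = τ * rp K φ)
    (hopt : ∀ k ∈ Finset.Icc 1 K,
      ∑ i, (lam * eu k i - b i (ep k)) * eu k i ≤ 0) :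
    lam * τ * ∑ k ∈ Finset.Icc 1 K, ∑ i, eu k i ^ 2
      + σ1 * τ * ∑ k ∈ Finset.Icc 1 K, D (ey k) (ey k)
      + σ2 * D (ey K) (ey K)
    ≤ τ * ∑ k ∈ Finset.Icc 1 K, rp k (ey k)
      - τ * ∑ k ∈ Finset.Icc 1 K, ry k (ep k)
      - mm (ey 0) (ep 1) := by
  classical
  set q : ℕ → Y := fun j => if j ≤ K then ep j else 0 with hq
  set G : ℕ → ℝ := fun j => mm (ey j) (q (j + 1)) with hGdef
  have hk_mem : K ∈ Finset.Icc 1 K := Finset.mem_Icc.mpr ⟨hK, le_refl K⟩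
  have key : ∀ k ∈ Finset.Icc 1 K,
      (G (k - 1) - G k) + τ * σ1 * D (ey k) (ey k)
        + (if k = K then σ2 * D (ey K) (ey K) else 0)
        + τ * ∑ i, b i (ep k) * eu k i
      = τ * rp k (ey k) - τ * ry k (ep k) := by
    intro k hk
    obtain ⟨hk1, hkK⟩ := Finset.mem_Icc.mp hk
    have hS := hresy k hk (ep k)
    rcases eq_or_lt_of_le hkK with h | h
    · subst h
      have hA := hrespK (ey k)
      have hG1 : G (k - 1) = mm (ey (k - 1)) (ep k) := by
        have h1 : k - 1 + 1 = k := Nat.succ_pred_eq_of_pos hk1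
        simp [hGdef, hq, h1, (by omega : 0 < k)]
      have hG2 : G k = 0 := by
        simp [hGdef, hq]
      rw [hG1, hG2, if_pos rfl]
      simp only [map_sub, LinearMap.sub_apply] at hS hA ⊢
      linear_combination hA - hS
    · have hk' : k ∈ Finset.Icc 1 (K - 1) :=
        Finset.mem_Icc.mpr ⟨hk1, by omega⟩
      have hA := hresp k hk' (ey k)
      have hG1 : G (k - 1) = mm (ey (k - 1)) (ep k) := by
        have h1 : k - 1 + 1 = k := Nat.succ_pred_eq_of_pos hk1
        simp [hGdef, hq, h1, hkK, (by omega : k - 1 < K)]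
      have hG2 : G k = mm (ey k) (ep (k + 1)) := by
        have h2 : k + 1 ≤ K := h
        simp [hGdef, hq, h2, h]
      rw [hG1, hG2, if_neg (by omega)]
      simp only [map_sub, LinearMap.sub_apply] at hS hA ⊢
      linear_combination hA - hS
  have htel : ∑ k ∈ Finset.Icc 1 K, (G (k - 1) - G k) = G 0 - G K := by
    rw [← Finset.Ico_add_one_right_eq_Icc, Finset.sum_Ico_eq_sum_range]
    have hc : ∀ j ∈ Finset.range (K + 1 - 1),
        G (1 + j - 1) - G (1 + j) = G j - G (j + 1) := by
      intro j _
      have e1 : 1 + j - 1 = j := by omega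
      have e2 : 1 + j = j + 1 := by omega
      rw [e1, e2]
    rw [Finset.sum_congr rfl hc, Finset.sum_range_sub']
    have e3 : K + 1 - 1 = K := by omega
    rw [e3]
  have hG0 : G 0 = mm (ey 0) (ep 1) := by simp [hGdef, hq, hK, (by omega : 0 < K)]
  have hGK : G K = 0 := by simp [hGdef, hq]
  have hsum := Finset.sum_congr rfl key
  rw [Finset.sum_add_distrib, Finset.sum_add_distrib, Finset.sum_add_distrib,
    htel, hG0, hGK,
    Finset.sum_ite_eq' (Finset.Icc 1 K) K (fun _ => σ2 * D (ey K) (ey K)),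
    if_pos hk_mem, Finset.sum_sub_distrib, ← Finset.mul_sum, ← Finset.mul_sum,
    ← Finset.mul_sum, ← Finset.mul_sum] at hsum
  -- hsum : (mm (ey 0) (ep 1) - 0) + τ*σ1*Σ D + σ2*D + τ*ΣΣ b*eu = τ*Σrp - τ*Σry
  have hctrl : lam * τ * ∑ k ∈ Finset.Icc 1 K, ∑ i, eu k i ^ 2
      ≤ τ * ∑ k ∈ Finset.Icc 1 K, ∑ i, b i (ep k) * eu k i := by
    rw [mul_comm lam τ, mul_assoc]
    apply mul_le_mul_of_nonneg_left _ hτ.le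
    rw [Finset.mul_sum]
    apply Finset.sum_le_sum
    intro k hk
    have h := hopt k hk
    have hexp : ∑ i, (lam * eu k i - b i (ep k)) * eu k i
        = lam * ∑ i, eu k i ^ 2 - ∑ i, b i (ep k) * eu k i := by
      rw [Finset.mul_sum, ← Finset.sum_sub_distrib]
      apply Finset.sum_congr rfl
      intro i _
      ring
    rw [hexp] at h
    linarith
  linarith [hsum, hctrl]
end

section
/- Under the state error residual equations, the adjoint error residual equations, and the optimality-condition inequality, the error in the optimal control satisfies ‖e_u‖_U := (τ·∑_{k=1}^{K} ‖e_u^k‖_{ℝ^m}²)^{1/2} ≤ c₁ + (c₁² + c₂)^{1/2}, where c₁ = (1/(√2·α·λ))·(∑_{i=1}^m ‖b_i‖_{Y'}²)^{1/2}·R_p and c₂ = (1/λ)·[ ((2√2/α)·R_y + ((1+√2)/√α)·R_0)·R_p + (C_D²σ₁/α + σ₂/2)·R_0² + (C_D²σ₁/α² + σ₂/(2α))·R_y² ], with R_y = (τ·∑_{k=1}^{K} ‖r_y^k‖_{Y'}²)^{1/2}, R_p = (τ·∑_{k=1}^{K} ‖r_p^k‖_{Y'}²)^{1/2}, and R_0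 = m(e_y^0, e_y^0)^{1/2}. -/
/-!
Test the state error equation with `e_p^k` and the adjoint error equation with `e_y^k` and sum
over `k`: after summation by parts the mass and stiffness terms cancel, and the optimality
inequality leaves
`λ ‖e_u‖² + σ₁ ‖e_y‖_D² + σ₂ |e_y^K|_D² ≤ R₀ |e_p^1|_m + R_p ‖e_y‖ + R_y ‖e_p‖`.
Testing each equation with its own solution gives the discrete energy estimates, which bound
`‖e_y‖` by `R_y + ‖b‖ ‖e_u‖` and `R₀`, and `‖e_p‖`, `|e_p^1|_m` by `R_p` and the `D`-norms of `e_y`.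
Substituting these and absorbing the `D`-norm terms by Young's inequality leaves the quadratic
inequality `‖e_u‖² ≤ 2 c₁ ‖e_u‖ + c₂`.
-/

open Finset

section Telescoping

variable {G : Type*} [AddCommGroup G]

theorem sum_Icc_one_sub_pred (f : ℕ → G) (K : ℕ) :
    ∑ k ∈ Icc 1 K, (f k - f (k - 1)) = f K - f 0 := by
  induction K with
  | zero => simp
  | succ n ih => rw [sum_Icc_succ_top (by omega), ih, Nat.add_sub_cancel]; abel

theorem sum_Icc_one_sub_succ (f : ℕ → G) (K : ℕ) :
    ∑ k ∈ Icc 1 K, (f k - f (k + 1)) = f 1 - f (K + 1) := by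
  induction K with
  | zero => simp
  | succ n ih => rw [sum_Icc_succ_top (by omega), ih]; abel

theorem sum_Icc_one_eq_sum_add_top {M : Type*} [AddCommMonoid M] {K : ℕ} (hK : 1 ≤ K)
    (f : ℕ → M) : ∑ k ∈ Icc 1 K, f k = ∑ k ∈ Icc 1 (K - 1), f k + f K := by
  obtain ⟨n, rfl⟩ := Nat.exists_eq_add_of_le' hK
  rw [sum_Icc_succ_top (by omega), Nat.add_sub_cancel]

end Telescoping

namespace LinearMap.BilinForm

variable {M : Type*} [AddCommGroup M] [Module ℝ M] {B : LinearMap.BilinForm ℝ M}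

theorem abs_apply_le_sqrt_mul_sqrt (hsymm : ∀ v w, B v w = B w v) (hpos : ∀ v, 0 ≤ B v v)
    (v w : M) : |B v w| ≤ √(B v v) * √(B w w) := by
  rw [← Real.sqrt_mul (hpos v)]
  refine Real.abs_le_sqrt ?_
  calc B v w ^ 2 = B v w * B w v := by rw [sq, hsymm w v]
    _ ≤ B v v * B w w := B.apply_mul_apply_le_of_forall_zero_le hpos v w

theorem half_sub_half_le_apply_sub (hsymm : ∀ v w, B v w = B w v) (hpos : ∀ v, 0 ≤ B v v)
    (v w : M) : B v v / 2 - B w w / 2 ≤ B (v - w) v := by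
  have := hpos (v - w)
  simp only [map_sub, LinearMap.sub_apply] at this ⊢
  linarith [hsymm w v]

theorem sum_apply_sub_pred_eq (y p : ℕ → M) {K : ℕ} (hK : 1 ≤ K) :
    ∑ k ∈ Icc 1 K, B (y k - y (k - 1)) (p k)
      = ∑ k ∈ Icc 1 (K - 1), B (y k) (p k - p (k + 1)) + B (y K) (p K) - B (y 0) (p 1) := by
  obtain ⟨n, rfl⟩ : ∃ n, K = n + 1 := ⟨K - 1, by omega⟩
  have htel := sum_Icc_one_sub_succ (fun k => B (y (k - 1)) (p k)) n
  simp only [map_sub, LinearMap.sub_apply, sum_sub_distrib, Nat.add_sub_cancel] at htel ⊢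
  rw [sum_Icc_succ_top (by omega), sum_Icc_succ_top (by omega), Nat.add_sub_cancel]
  linarith

theorem half_sub_half_le_sum_apply_sub_pred (hsymm : ∀ v w, B v w = B w v)
    (hpos : ∀ v, 0 ≤ B v v) (y : ℕ → M) (K : ℕ) :
    B (y K) (y K) / 2 - B (y 0) (y 0) / 2 ≤ ∑ k ∈ Icc 1 K, B (y k - y (k - 1)) (y k) := by
  rw [← sum_Icc_one_sub_pred (fun k => B (y k) (y k) / 2) K]
  exact sum_le_sum fun k _ => half_sub_half_le_apply_sub hsymm hpos _ _

theorem half_sub_half_le_sum_apply_sub_succ (hsymm : ∀ v w, B v w = B w v)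
    (hpos : ∀ v, 0 ≤ B v v) (p : ℕ → M) (K : ℕ) :
    B (p 1) (p 1) / 2 - B (p (K + 1)) (p (K + 1)) / 2
      ≤ ∑ k ∈ Icc 1 K, B (p k) (p k - p (k + 1)) := by
  rw [← sum_Icc_one_sub_succ (fun k => B (p k) (p k) / 2) K]
  exact sum_le_sum fun k _ => (half_sub_half_le_apply_sub hsymm hpos _ _).trans_eq (hsymm _ _)

end LinearMap.BilinForm

noncomputable def timeL2Norm (τ : ℝ) (K : ℕ) (f : ℕ → ℝ) : ℝ :=
  √(τ * ∑ k ∈ Icc 1 K, f k ^ 2)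

section TimeL2Norm

variable {τ : ℝ} {K : ℕ}

theorem timeL2Norm_nonneg (f : ℕ → ℝ) : 0 ≤ timeL2Norm τ K f := Real.sqrt_nonneg _

theorem sq_timeL2Norm (hτ : 0 ≤ τ) (f : ℕ → ℝ) :
    timeL2Norm τ K f ^ 2 = τ * ∑ k ∈ Icc 1 K, f k ^ 2 :=
  Real.sq_sqrt (mul_nonneg hτ (sum_nonneg fun _ _ => sq_nonneg _))

theorem timeL2Norm_sqrt {g : ℕ → ℝ} (hg : ∀ k, 0 ≤ g k) :
    timeL2Norm τ K (fun k => √(g k)) = √(τ * ∑ k ∈ Icc 1 K, g k) := by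
  simp only [timeL2Norm, Real.sq_sqrt (hg _)]

theorem mul_sum_mul_le_timeL2Norm_mul (hτ : 0 ≤ τ) (f g : ℕ → ℝ) :
    τ * ∑ k ∈ Icc 1 K, f k * g k ≤ timeL2Norm τ K f * timeL2Norm τ K g := by
  rw [timeL2Norm, timeL2Norm, Real.sqrt_mul hτ, Real.sqrt_mul hτ,
    mul_mul_mul_comm, Real.mul_self_sqrt hτ]
  exact mul_le_mul_of_nonneg_left (Real.sum_mul_le_sqrt_mul_sqrt _ f g) hτ

section Normed

variable {E : Type*} [SeminormedAddCommGroup E] [NormedSpace ℝ E]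

theorem sum_apply_mul_le {ι : Type*} [Fintype ι] (b : ι → E →L[ℝ] ℝ) (v : E) (c : ι → ℝ) :
    ∑ i, b i v * c i ≤ √(∑ i, ‖b i‖ ^ 2) * ‖v‖ * √(∑ i, c i ^ 2) := by
  refine (Real.sum_mul_le_sqrt_mul_sqrt _ _ _).trans
    (mul_le_mul_of_nonneg_right ?_ (Real.sqrt_nonneg _))
  rw [← Real.sqrt_sq (norm_nonneg v), ← Real.sqrt_mul (sum_nonneg fun _ _ => sq_nonneg _),
    sum_mul]
  refine Real.sqrt_le_sqrt (sum_le_sum fun i _ => ?_)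
  rw [← mul_pow, sq_le_sq, abs_of_nonneg (a := ‖b i‖ * ‖v‖) (by positivity)]
  exact (b i).le_opNorm v

theorem mul_sq_timeL2Norm_le_sum_apply {α : ℝ} {a : E →ₗ[ℝ] E →ₗ[ℝ] ℝ} (hτ : 0 ≤ τ)
    (ha : ∀ v, α * ‖v‖ ^ 2 ≤ a v v) (v : ℕ → E) :
    α * timeL2Norm τ K (‖v ·‖) ^ 2 ≤ τ * ∑ k ∈ Icc 1 K, a (v k) (v k) := by
  rw [sq_timeL2Norm hτ, mul_left_comm, mul_sum]
  exact mul_le_mul_of_nonneg_left (sum_le_sum fun k _ => ha (v k)) hτ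

theorem abs_mul_sum_apply_le_timeL2Norm_mul (hτ : 0 ≤ τ) (r : ℕ → E →L[ℝ] ℝ) (v : ℕ → E) :
    |τ * ∑ k ∈ Icc 1 K, r k (v k)| ≤ timeL2Norm τ K (‖r ·‖) * timeL2Norm τ K (‖v ·‖) := by
  rw [abs_mul, abs_of_nonneg hτ]
  refine (mul_le_mul_of_nonneg_left (abs_sum_le_sum_abs _ _) hτ).trans ?_
  refine (mul_le_mul_of_nonneg_left (sum_le_sum fun k _ => ?_) hτ).trans
    (mul_sum_mul_le_timeL2Norm_mul hτ _ _)
  exact (r k).le_opNorm (v k)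

theorem mul_sum_sum_apply_mul_le {ι : Type*} [Fintype ι] (hτ : 0 ≤ τ) (b : ι → E →L[ℝ] ℝ)
    (v : ℕ → E) (c : ℕ → ι → ℝ) :
    τ * ∑ k ∈ Icc 1 K, ∑ i, b i (v k) * c k i
      ≤ √(∑ i, ‖b i‖ ^ 2) * timeL2Norm τ K (‖v ·‖)
        * timeL2Norm τ K (fun k => √(∑ i, c k i ^ 2)) := by
  calc τ * ∑ k ∈ Icc 1 K, ∑ i, b i (v k) * c k i
      ≤ τ * ∑ k ∈ Icc 1 K, √(∑ i, ‖b i‖ ^ 2) * ‖v k‖ * √(∑ i, c k i ^ 2) :=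
        mul_le_mul_of_nonneg_left (sum_le_sum fun k _ => sum_apply_mul_le b (v k) (c k)) hτ
    _ = √(∑ i, ‖b i‖ ^ 2) * (τ * ∑ k ∈ Icc 1 K, ‖v k‖ * √(∑ i, c k i ^ 2)) := by
        simp only [mul_sum]
        exact sum_congr rfl fun k _ => by ring
    _ ≤ _ := by
        rw [mul_assoc]
        exact mul_le_mul_of_nonneg_left (mul_sum_mul_le_timeL2Norm_mul hτ _ _)
          (Real.sqrt_nonneg _)

theorem abs_mul_sum_apply_le_mul_timeL2Norm {D : E →ₗ[ℝ] E →ₗ[ℝ] ℝ} {C : ℝ} (hτ : 0 ≤ τ)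
    (hsymm : ∀ v w, D v w = D w v) (hpos : ∀ v, 0 ≤ D v v) (hC0 : 0 ≤ C)
    (hC : ∀ v, D v v ≤ C ^ 2 * ‖v‖ ^ 2) (y p : ℕ → E) :
    |τ * ∑ k ∈ Icc 1 K, D (y k) (p k)|
      ≤ C * timeL2Norm τ K (fun k => √(D (y k) (y k))) * timeL2Norm τ K (‖p ·‖) := by
  have hpoint (v w : E) : |D v w| ≤ √(D v v) * (C * ‖w‖) := by
    refine (LinearMap.BilinForm.abs_apply_le_sqrt_mul_sqrt hsymm hpos v w).trans ?_
    gcongr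
    rw [← Real.sqrt_sq (by positivity : 0 ≤ C * ‖w‖), mul_pow]
    exact Real.sqrt_le_sqrt (hC w)
  rw [abs_mul, abs_of_nonneg hτ]
  calc τ * |∑ k ∈ Icc 1 K, D (y k) (p k)|
      ≤ τ * ∑ k ∈ Icc 1 K, √(D (y k) (y k)) * (C * ‖p k‖) :=
        mul_le_mul_of_nonneg_left ((abs_sum_le_sum_abs _ _).trans
          (sum_le_sum fun k _ => hpoint _ _)) hτ
    _ = C * (τ * ∑ k ∈ Icc 1 K, √(D (y k) (y k)) * ‖p k‖) := by
        simp only [mul_sum]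
        exact sum_congr rfl fun k _ => by ring
    _ ≤ _ := by
        rw [mul_assoc]
        exact mul_le_mul_of_nonneg_left (mul_sum_mul_le_timeL2Norm_mul hτ _ _) hC0

end Normed

end TimeL2Norm

theorem le_add_sqrt_of_sq_le_two_mul_add {x c d : ℝ} (h : x ^ 2 ≤ 2 * c * x + d) :
    x ≤ c + √(c ^ 2 + d) := by
  have : |x - c| ≤ √(c ^ 2 + d) := Real.abs_le_sqrt (by linarith)
  linarith [le_abs_self (x - c)]

theorem le_of_half_sq_add_mul_sq_le {α g q P M : ℝ} (hα : 0 < α) (hg : 0 ≤ g) (hq : 0 ≤ q)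
    (hM : 0 ≤ M) (h : M ^ 2 / 2 + α * P ^ 2 ≤ g * P + q ^ 2 / 2) :
    P ≤ g / α + q / √(2 * α) ∧ M ≤ g / √(2 * α) + q := by
  set s := √(2 * α)
  have hs : 0 < s := Real.sqrt_pos.mpr (by positivity)
  have hs2 : s ^ 2 = 2 * α := Real.sq_sqrt (by positivity)
  obtain ⟨u, rfl⟩ : ∃ u, g = α * u := ⟨g / α, by field_simp⟩
  obtain ⟨v, rfl⟩ : ∃ v, q = s * v := ⟨q / s, by field_simp⟩
  have hu : 0 ≤ u := nonneg_of_mul_nonneg_right hg hα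
  have hv : 0 ≤ v := nonneg_of_mul_nonneg_right hq hs
  have hαu : α * u / s = s * (u / 2) := by field_simp; linear_combination (-u) * hs2
  rw [mul_div_cancel_left₀ _ hα.ne', mul_div_cancel_left₀ _ hs.ne', hαu]
  have h' : M ^ 2 / 2 + α * P ^ 2 ≤ α * u * P + α * v ^ 2 := by
    linear_combination h + v ^ 2 / 2 * hs2
  constructor
  · have hPsq : P ^ 2 ≤ u * P + v ^ 2 := by
      refine le_of_mul_le_mul_left ?_ hα
      nlinarith [sq_nonneg M]
    by_contra! hlt
    have hP0 : 0 < P := by linarith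
    nlinarith [mul_lt_mul_of_pos_left hlt hP0, mul_le_mul_of_nonneg_left (by linarith : v ≤ P) hv]
  · refine (pow_le_pow_iff_left₀ hM (by positivity) two_ne_zero).mp ?_
    nlinarith [mul_nonneg hα.le (sq_nonneg (P - u / 2)), mul_nonneg hα.le (mul_nonneg hu hv)]

theorem mul_add_le_sq_add (Q a b : ℝ) : Q * (a + b) ≤ Q ^ 2 + (a ^ 2 + b ^ 2) / 2 := by
  nlinarith [sq_nonneg (Q - (a + b) / 2), sq_nonneg (a - b)]

theorem mul_sq_le_of_error_bounds {X Yn Pn M E EK R0 Ry Rp Bc CD σ1 σ2 lam a r : ℝ}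
    (hr : r ^ 2 = a / 2) (hR0 : 0 ≤ R0) (hRy : 0 ≤ Ry) (hRp : 0 ≤ Rp) (hσ1 : 0 ≤ σ1)
    (hσ2 : 0 ≤ σ2) (hD : lam * X ^ 2 + σ1 * E ^ 2 + σ2 * EK ^ 2 ≤ R0 * M + Rp * Yn + Ry * Pn)
    (hY : Yn ≤ (Ry + Bc * X) * a + R0 * r)
    (hP : Pn ≤ (Rp + CD * σ1 * E) * a + σ2 * EK * r)
    (hM : M ≤ (Rp + CD * σ1 * E) * r + σ2 * EK) :
    lam * X ^ 2 ≤ a * Bc * Rp * X + 2 * a * Ry * Rp + 2 * r * R0 * Rp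
      + CD ^ 2 * σ1 * (a * R0 ^ 2 / 2 + a ^ 2 * Ry ^ 2) / 2
      + σ2 * (R0 ^ 2 + a * Ry ^ 2 / 2) / 2 := by
  have hyoung1 := mul_le_mul_of_nonneg_left (mul_add_le_sq_add E (CD * r * R0) (CD * a * Ry)) hσ1
  have hyoung2 := mul_le_mul_of_nonneg_left (mul_add_le_sq_add EK R0 (r * Ry)) hσ2
  simp only [mul_pow, hr] at hyoung1 hyoung2
  linarith [mul_le_mul_of_nonneg_left hY hRp, mul_le_mul_of_nonneg_left hP hRy,
    mul_le_mul_of_nonneg_left hM hR0]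

theorem sq_le_two_mul_add_of_error_bounds {X Yn Pn M E EK R0 Ry Rp Bc CD σ1 σ2 α lam : ℝ}
    (hα : 0 < α) (hlam : 0 < lam) (hX : 0 ≤ X) (hR0 : 0 ≤ R0)
    (hRy : 0 ≤ Ry) (hRp : 0 ≤ Rp) (hBc : 0 ≤ Bc) (hσ1 : 0 ≤ σ1) (hσ2 : 0 ≤ σ2)
    (hD : lam * X ^ 2 + σ1 * E ^ 2 + σ2 * EK ^ 2 ≤ R0 * M + Rp * Yn + Ry * Pn)
    (hY : Yn ≤ (Ry + Bc * X) / α + R0 / √(2 * α))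
    (hP : Pn ≤ (Rp + CD * σ1 * E) / α + σ2 * EK / √(2 * α))
    (hM : M ≤ (Rp + CD * σ1 * E) / √(2 * α) + σ2 * EK) :
    X ^ 2 ≤ 2 * ((1 / (√2 * α * lam)) * Bc * Rp) * X + (1 / lam) *
      (((2 * √2 / α) * Ry + ((1 + √2) / √α) * R0) * Rp
        + (CD ^ 2 * σ1 / α + σ2 / 2) * R0 ^ 2
        + (CD ^ 2 * σ1 / α ^ 2 + σ2 / (2 * α)) * Ry ^ 2) := by
  have hs2 : √2 ^ 2 = 2 := Real.sq_sqrt zero_le_two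
  have hsα : √α ^ 2 = α := Real.sq_sqrt hα.le
  rw [Real.sqrt_mul zero_le_two] at hY hP hM
  set a := 1 / α with ha
  set r := 1 / (√2 * √α) with hr
  have hr2 : r ^ 2 = a / 2 := by rw [hr, ha, div_pow, mul_pow, hs2, hsα]; field_simp
  rw [div_eq_mul_one_div (Ry + Bc * X), div_eq_mul_one_div R0] at hY
  rw [div_eq_mul_one_div (Rp + _), div_eq_mul_one_div (σ2 * EK)] at hP
  rw [div_eq_mul_one_div (Rp + _)] at hM
  -- `htight` has sharper constants than the goal; what remains only compares them
  have htight := mul_sq_le_of_error_bounds hr2 hR0 hRy hRp hσ1 hσ2 hD hY hP hM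
  have hconst : lam * (2 * ((1 / (√2 * α * lam)) * Bc * Rp) * X + (1 / lam) *
      (((2 * √2 / α) * Ry + ((1 + √2) / √α) * R0) * Rp
        + (CD ^ 2 * σ1 / α + σ2 / 2) * R0 ^ 2
        + (CD ^ 2 * σ1 / α ^ 2 + σ2 / (2 * α)) * Ry ^ 2))
      = √2 * a * Bc * Rp * X + 2 * √2 * a * Ry * Rp + (2 + √2) * r * R0 * Rp
        + (CD ^ 2 * σ1 * a + σ2 / 2) * R0 ^ 2 + (CD ^ 2 * σ1 * a ^ 2 + σ2 * a / 2) * Ry ^ 2 := by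
    rw [ha, hr]
    field_simp
    linear_combination (2 * α ^ 2 * Rp * R0 - 2 * α * Bc * Rp * X * √α) * hs2
  rw [← mul_le_mul_iff_right₀ hlam, hconst]
  have hs1 : 0 ≤ √2 - 1 := sub_nonneg.mpr (Real.one_le_sqrt.mpr one_le_two)
  linear_combination htight + mul_nonneg hs1 (by positivity : 0 ≤ a * Bc * Rp * X)
    + 2 * mul_nonneg hs1 (by positivity : 0 ≤ a * Ry * Rp)
    + (by positivity : 0 ≤ √2 * r * R0 * Rp)
    + 3 / 4 * (by positivity : 0 ≤ CD ^ 2 * σ1 * a * R0 ^ 2)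
    + 1 / 2 * (by positivity : 0 ≤ CD ^ 2 * σ1 * a ^ 2 * Ry ^ 2)
    + 1 / 4 * (by positivity : 0 ≤ σ2 * a * Ry ^ 2)

section ErrorEquations

variable {Y ι : Type*} [NormedAddCommGroup Y] [NormedSpace ℝ Y] [Fintype ι] {K : ℕ}
  {τ α σ1 σ2 lam CD : ℝ} {a mm D : Y →ₗ[ℝ] Y →ₗ[ℝ] ℝ} {b : ι → Y →L[ℝ] ℝ}
  {ey ep : ℕ → Y} {eu : ℕ → ι → ℝ} {ry rp : ℕ → Y →L[ℝ] ℝ}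

theorem sum_control_pairing_eq (hK : 1 ≤ K)
    (hresy : ∀ k ∈ Icc 1 K, ∀ φ : Y,
      mm (ey k - ey (k - 1)) φ + τ * a (ey k) φ - τ * ∑ i, b i φ * eu k i = τ * ry k φ)
    (hresp : ∀ k ∈ Icc 1 (K - 1), ∀ φ : Y,
      mm φ (ep k - ep (k + 1)) + τ * a φ (ep k) + τ * σ1 * D (ey k) φ = τ * rp k φ)
    (hrespK : ∀ φ : Y,
      mm φ (ep K) + τ * a φ (ep K) + (τ * σ1 + σ2) * D (ey K) φ = τ * rp K φ) :
    τ * ∑ k ∈ Icc 1 K, ∑ i, b i (ep k) * eu k i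
      = τ * ∑ k ∈ Icc 1 K, rp k (ey k) - τ * ∑ k ∈ Icc 1 K, ry k (ep k) - mm (ey 0) (ep 1)
        - τ * σ1 * ∑ k ∈ Icc 1 K, D (ey k) (ey k) - σ2 * D (ey K) (ey K) := by
  have hy := sum_congr rfl fun k hk => hresy k hk (ep k)
  have hp := sum_congr rfl fun k hk => hresp k hk (ey k)
  simp only [sum_add_distrib, sum_sub_distrib, ← mul_sum] at hy hp
  rw [LinearMap.BilinForm.sum_apply_sub_pred_eq ey ep hK] at hy
  simp only [sum_Icc_one_eq_sum_add_top hK] at hy ⊢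
  linarith [hrespK (ey K)]

theorem control_error_duality_bound (hK : 1 ≤ K) (hτ : 0 ≤ τ)
    (hmsymm : ∀ v w, mm v w = mm w v) (hmpos : ∀ v, 0 ≤ mm v v) (hDpos : ∀ v, 0 ≤ D v v)
    (hresy : ∀ k ∈ Icc 1 K, ∀ φ : Y,
      mm (ey k - ey (k - 1)) φ + τ * a (ey k) φ - τ * ∑ i, b i φ * eu k i = τ * ry k φ)
    (hresp : ∀ k ∈ Icc 1 (K - 1), ∀ φ : Y,
      mm φ (ep k - ep (k + 1)) + τ * a φ (ep k) + τ * σ1 * D (ey k) φ = τ * rp k φ)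
    (hrespK : ∀ φ : Y,
      mm φ (ep K) + τ * a φ (ep K) + (τ * σ1 + σ2) * D (ey K) φ = τ * rp K φ)
    (hopt : ∀ k ∈ Icc 1 K, ∑ i, (lam * eu k i - b i (ep k)) * eu k i ≤ 0) :
    lam * timeL2Norm τ K (fun k => √(∑ i, eu k i ^ 2)) ^ 2
        + σ1 * timeL2Norm τ K (fun k => √(D (ey k) (ey k))) ^ 2 + σ2 * √(D (ey K) (ey K)) ^ 2
      ≤ √(mm (ey 0) (ey 0)) * √(mm (ep 1) (ep 1))
        + timeL2Norm τ K (‖rp ·‖) * timeL2Norm τ K (‖ey ·‖)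
        + timeL2Norm τ K (‖ry ·‖) * timeL2Norm τ K (‖ep ·‖) := by
  rw [timeL2Norm_sqrt fun k => by positivity, timeL2Norm_sqrt fun k => hDpos _,
    Real.sq_sqrt (by positivity), Real.sq_sqrt (mul_nonneg hτ (sum_nonneg fun k _ => hDpos _)),
    Real.sq_sqrt (hDpos _)]
  have hcontrol : lam * (τ * ∑ k ∈ Icc 1 K, ∑ i, eu k i ^ 2)
      ≤ τ * ∑ k ∈ Icc 1 K, ∑ i, b i (ep k) * eu k i := by
    rw [mul_left_comm, mul_sum]
    refine mul_le_mul_of_nonneg_left (sum_le_sum fun k hk => ?_) hτ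
    have hsplit : ∑ i, (lam * eu k i - b i (ep k)) * eu k i
        = lam * ∑ i, eu k i ^ 2 - ∑ i, b i (ep k) * eu k i := by
      rw [mul_sum, ← sum_sub_distrib]
      exact sum_congr rfl fun i _ => by ring
    linarith [hopt k hk]
  rw [sum_control_pairing_eq hK hresy hresp hrespK] at hcontrol
  have h0 := LinearMap.BilinForm.abs_apply_le_sqrt_mul_sqrt hmsymm hmpos (ey 0) (ep 1)
  have h1 := abs_mul_sum_apply_le_timeL2Norm_mul (K := K) hτ rp ey
  have h2 := abs_mul_sum_apply_le_timeL2Norm_mul (K := K) hτ ry ep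
  linarith [neg_abs_le (mm (ey 0) (ep 1)), le_abs_self (τ * ∑ k ∈ Icc 1 K, rp k (ey k)),
    neg_abs_le (τ * ∑ k ∈ Icc 1 K, ry k (ep k))]

theorem state_error_bound (hτ : 0 ≤ τ) (hα : 0 < α) (ha : ∀ v, α * ‖v‖ ^ 2 ≤ a v v)
    (hmsymm : ∀ v w, mm v w = mm w v) (hmpos : ∀ v, 0 ≤ mm v v)
    (hresy : ∀ k ∈ Icc 1 K, ∀ φ : Y,
      mm (ey k - ey (k - 1)) φ + τ * a (ey k) φ - τ * ∑ i, b i φ * eu k i = τ * ry k φ) :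
    timeL2Norm τ K (‖ey ·‖)
      ≤ (timeL2Norm τ K (‖ry ·‖)
          + √(∑ i, ‖b i‖ ^ 2) * timeL2Norm τ K (fun k => √(∑ i, eu k i ^ 2))) / α
        + √(mm (ey 0) (ey 0)) / √(2 * α) := by
  have hy := sum_congr rfl fun k hk => hresy k hk (ey k)
  simp only [sum_add_distrib, sum_sub_distrib, ← mul_sum] at hy
  have hm := LinearMap.BilinForm.half_sub_half_le_sum_apply_sub_pred hmsymm hmpos ey K
  have ha' := mul_sq_timeL2Norm_le_sum_apply (K := K) hτ ha ey
  have hr := abs_mul_sum_apply_le_timeL2Norm_mul (K := K) hτ ry ey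
  have hb := mul_sum_sum_apply_mul_le (K := K) hτ b ey eu
  refine (le_of_half_sq_add_mul_sq_le hα
    (add_nonneg (timeL2Norm_nonneg _) (mul_nonneg (Real.sqrt_nonneg _) (timeL2Norm_nonneg _)))
    (Real.sqrt_nonneg _) (Real.sqrt_nonneg (mm (ey K) (ey K))) ?_).1
  rw [Real.sq_sqrt (hmpos _), Real.sq_sqrt (hmpos _)]
  linarith [le_abs_self (τ * ∑ k ∈ Icc 1 K, ry k (ey k))]

theorem adjoint_error_bound (hK : 1 ≤ K) (hτ : 0 ≤ τ) (hα : 0 < α)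
    (ha : ∀ v, α * ‖v‖ ^ 2 ≤ a v v) (hmsymm : ∀ v w, mm v w = mm w v)
    (hmpos : ∀ v, 0 ≤ mm v v) (hDsymm : ∀ v w, D v w = D w v) (hDpos : ∀ v, 0 ≤ D v v)
    (hDm : ∀ v, D v v ≤ mm v v) (hCD : 0 ≤ CD) (hσ1 : 0 ≤ σ1) (hσ2 : 0 ≤ σ2)
    (hDC : ∀ v, D v v ≤ CD ^ 2 * ‖v‖ ^ 2)
    (hresp : ∀ k ∈ Icc 1 (K - 1), ∀ φ : Y,
      mm φ (ep k - ep (k + 1)) + τ * a φ (ep k) + τ * σ1 * D (ey k) φ = τ * rp k φ)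
    (hrespK : ∀ φ : Y,
      mm φ (ep K) + τ * a φ (ep K) + (τ * σ1 + σ2) * D (ey K) φ = τ * rp K φ) :
    timeL2Norm τ K (‖ep ·‖)
        ≤ (timeL2Norm τ K (‖rp ·‖) + CD * σ1 * timeL2Norm τ K (fun k => √(D (ey k) (ey k)))) / α
          + σ2 * √(D (ey K) (ey K)) / √(2 * α) ∧
      √(mm (ep 1) (ep 1))
        ≤ (timeL2Norm τ K (‖rp ·‖) + CD * σ1 * timeL2Norm τ K (fun k => √(D (ey k) (ey k))))
            / √(2 * α) + σ2 * √(D (ey K) (ey K)) := by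
  have hp := sum_congr rfl fun k hk => hresp k hk (ep k)
  simp only [sum_add_distrib, ← mul_sum] at hp
  have hm := LinearMap.BilinForm.half_sub_half_le_sum_apply_sub_succ hmsymm hmpos ep (K - 1)
  rw [Nat.sub_add_cancel hK] at hm
  have ha' := mul_sq_timeL2Norm_le_sum_apply (K := K) hτ ha ep
  have hr := le_abs_self _ |>.trans (abs_mul_sum_apply_le_timeL2Norm_mul (K := K) hτ rp ep)
  have hc : -(σ1 * (τ * ∑ k ∈ Icc 1 K, D (ey k) (ep k)))
      ≤ σ1 * (CD * timeL2Norm τ K (fun k => √(D (ey k) (ey k))) * timeL2Norm τ K (‖ep ·‖)) := by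
    rw [← mul_neg]
    exact mul_le_mul_of_nonneg_left ((neg_le_abs _).trans
      (abs_mul_sum_apply_le_mul_timeL2Norm hτ hDsymm hDpos hCD hDC ey ep)) hσ1
  have hterminal : -(σ2 * D (ey K) (ep K))
      ≤ (σ2 * √(D (ey K) (ey K))) ^ 2 / 2 + mm (ep K) (ep K) / 2 := by
    have hcs := (neg_le_abs _).trans
      (LinearMap.BilinForm.abs_apply_le_sqrt_mul_sqrt hDsymm hDpos (ey K) (ep K))
    calc -(σ2 * D (ey K) (ep K)) = σ2 * -D (ey K) (ep K) := by ring
      _ ≤ σ2 * (√(D (ey K) (ey K)) * √(D (ep K) (ep K))) := by gcongr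
      _ ≤ σ2 * √(D (ey K) (ey K)) * √(mm (ep K) (ep K)) := by
        rw [mul_assoc]; gcongr; exact hDm _
      _ ≤ _ := by
        linarith [two_mul_le_add_sq (σ2 * √(D (ey K) (ey K))) √(mm (ep K) (ep K)),
          Real.sq_sqrt (hmpos (ep K))]
  simp only [sum_Icc_one_eq_sum_add_top hK] at ha' hr hc
  refine le_of_half_sq_add_mul_sq_le hα (add_nonneg (timeL2Norm_nonneg _)
    (mul_nonneg (mul_nonneg hCD hσ1) (timeL2Norm_nonneg _)))
    (mul_nonneg hσ2 (Real.sqrt_nonneg _)) (Real.sqrt_nonneg _) ?_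
  rw [Real.sq_sqrt (hmpos _)]
  linarith [hrespK (ep K)]

end ErrorEquations

/-- A posteriori bound for the error in the optimal control
(`‖u* − u_N*‖_U ≤ c₁ + √(c₁² + c₂)`), valid in both the control-constrained and
unconstrained case. -/
theorem optimal_control_error_bound
    {Y : Type*} [NormedAddCommGroup Y] [NormedSpace ℝ Y]
    {md K : ℕ} (hK : 1 ≤ K) {τ α : ℝ} (hτ : 0 < τ) (hα : 0 < α)
    (a mm D : Y →ₗ[ℝ] Y →ₗ[ℝ] ℝ)
    (ha : ∀ v : Y, α * ‖v‖ ^ 2 ≤ a v v)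
    (hmsymm : ∀ v w : Y, mm v w = mm w v)
    (hmpos : ∀ v : Y, 0 ≤ mm v v)
    (hDsymm : ∀ v w : Y, D v w = D w v)
    (hDpos : ∀ v : Y, 0 ≤ D v v)
    (hDm : ∀ v : Y, D v v ≤ mm v v)
    {CD σ1 σ2 lam : ℝ} (hCD : 0 ≤ CD) (hσ1 : 0 ≤ σ1) (hσ2 : 0 ≤ σ2) (hlam : 0 < lam)
    (hDC : ∀ v : Y, D v v ≤ CD ^ 2 * ‖v‖ ^ 2)
    (b : Fin md → Y →L[ℝ] ℝ)
    (ey ep : ℕ → Y) (eu : ℕ → Fin md → ℝ)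
    (ry rp : ℕ → Y →L[ℝ] ℝ)
    (hresy : ∀ k ∈ Finset.Icc 1 K, ∀ φ : Y,
      mm (ey k - ey (k - 1)) φ + τ * a (ey k) φ
        - τ * ∑ i, b i φ * eu k i = τ * ry k φ)
    (hresp : ∀ k ∈ Finset.Icc 1 (K - 1), ∀ φ : Y,
      mm φ (ep k - ep (k + 1)) + τ * a φ (ep k) + τ * σ1 * D (ey k) φ = τ * rp k φ)
    (hrespK : ∀ φ : Y,
      mm φ (ep K) + τ * a φ (ep K) + (τ * σ1 + σ2) * D (ey K) φ = τ * rp K φ)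
    (hopt : ∀ k ∈ Finset.Icc 1 K,
      ∑ i, (lam * eu k i - b i (ep k)) * eu k i ≤ 0)
    (Ry Rp R0 c1 c2 : ℝ)
    (hRy : Ry = Real.sqrt (τ * ∑ k ∈ Finset.Icc 1 K, ‖ry k‖ ^ 2))
    (hRp : Rp = Real.sqrt (τ * ∑ k ∈ Finset.Icc 1 K, ‖rp k‖ ^ 2))
    (hR0 : R0 = Real.sqrt (mm (ey 0) (ey 0)))
    (hc1 : c1 = (1 / (Real.sqrt 2 * α * lam)) * Real.sqrt (∑ i, ‖b i‖ ^ 2) * Rp)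
    (hc2 : c2 = (1 / lam) *
      (((2 * Real.sqrt 2 / α) * Ry + ((1 + Real.sqrt 2) / Real.sqrt α) * R0) * Rp
        + (CD ^ 2 * σ1 / α + σ2 / 2) * R0 ^ 2
        + (CD ^ 2 * σ1 / α ^ 2 + σ2 / (2 * α)) * Ry ^ 2)) :
    Real.sqrt (τ * ∑ k ∈ Finset.Icc 1 K, ∑ i, eu k i ^ 2)
      ≤ c1 + Real.sqrt (c1 ^ 2 + c2) := by
  have hX : √(τ * ∑ k ∈ Finset.Icc 1 K, ∑ i, eu k i ^ 2)
      = timeL2Norm τ K (fun k => √(∑ i, eu k i ^ 2)) :=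
    (timeL2Norm_sqrt fun k => by positivity).symm
  have hD := control_error_duality_bound hK hτ.le hmsymm hmpos hDpos hresy hresp hrespK hopt
  have hY := state_error_bound hτ.le hα ha hmsymm hmpos hresy
  obtain ⟨hP, hM⟩ := adjoint_error_bound hK hτ.le hα ha hmsymm hmpos hDsymm hDpos hDm hCD hσ1 hσ2
    hDC hresp hrespK
  subst hRy hRp hR0 hc1 hc2
  rw [hX]
  exact le_add_sqrt_of_sq_le_two_mul_add <| sq_le_two_mul_add_of_error_bounds hα hlam
    (timeL2Norm_nonneg _) (Real.sqrt_nonneg _) (timeL2Norm_nonneg _) (timeL2Norm_nonneg _)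
    (Real.sqrt_nonneg _) hσ1 hσ2 hD hY hP hM
end

section
/- Under the state error residual equations and the additional assumption that the control error satisfies (τ·∑_{k=1}^{K} ‖e_u^k‖_{ℝ^m}²)^{1/2} ≤ Δ_u for some Δ_u ≥ 0, for every k = 1, …, K the state optimality error satisfies m(e_y^k, e_y^k) + τ·∑_{k'=1}^{k} a(e_y^{k'}, e_y^{k'}) ≤ (2τ/α)·∑_{k'=1}^{k} ‖r_y^{k'}‖_{Y'}² + (2/α)·(∑_{i=1}^{m} ‖b_i‖_{Y'}²)·Δ_u² + m(e_y^0, e_y^0). -/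
/-- A posteriori energy bound for the optimal state error at every time step,
given a bound `Δu` on the control error (`⦀e_y^k⦀_y ≤ Δ_N^{y,*,k}`). -/
theorem optimal_state_error_bound
    {Y : Type*} [NormedAddCommGroup Y] [NormedSpace ℝ Y]
    {md K : ℕ} (hK : 1 ≤ K) {τ α : ℝ} (hτ : 0 < τ) (hα : 0 < α)
    (a mm : Y →ₗ[ℝ] Y →ₗ[ℝ] ℝ)
    (ha : ∀ v : Y, α * ‖v‖ ^ 2 ≤ a v v)
    (hmsymm : ∀ v w : Y, mm v w = mm w v)
    (hmpos : ∀ v : Y, 0 ≤ mm v v)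
    (b : Fin md → Y →L[ℝ] ℝ)
    (ey : ℕ → Y) (eu : ℕ → Fin md → ℝ) (ry : ℕ → Y →L[ℝ] ℝ)
    (hres : ∀ k ∈ Finset.Icc 1 K, ∀ φ : Y,
      mm (ey k - ey (k - 1)) φ + τ * a (ey k) φ
        - τ * ∑ i, b i φ * eu k i = τ * ry k φ)
    (Δu : ℝ) (hΔu : 0 ≤ Δu)
    (hEu : Real.sqrt (τ * ∑ k ∈ Finset.Icc 1 K, ∑ i, eu k i ^ 2) ≤ Δu) :
    ∀ k ∈ Finset.Icc 1 K,
      mm (ey k) (ey k) + τ * ∑ k' ∈ Finset.Icc 1 k, a (ey k') (ey k')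
        ≤ (2 * τ / α) * ∑ k' ∈ Finset.Icc 1 k, ‖ry k'‖ ^ 2
          + (2 / α) * (∑ i, ‖b i‖ ^ 2) * Δu ^ 2
          + mm (ey 0) (ey 0) := by
  -- Young's inequality with parameter α
  have young : ∀ x y : ℝ, x * y ≤ x ^ 2 / α + α / 4 * y ^ 2 := by
    intro x y
    have h : x * y - α / 4 * y ^ 2 ≤ x ^ 2 / α := by
      rw [le_div_iff₀ hα]
      nlinarith [sq_nonneg (x - α / 2 * y)]
    linarith
  -- the single-step energy estimate
  have step : ∀ k ∈ Finset.Icc 1 K,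
      mm (ey k) (ey k) + τ * a (ey k) (ey k)
        ≤ mm (ey (k - 1)) (ey (k - 1)) + 2 * τ / α * ‖ry k‖ ^ 2
          + 2 * τ / α * ((∑ i, ‖b i‖ ^ 2) * ∑ i, eu k i ^ 2) := by
    intro k hk
    set e := ey k with he
    set p := ey (k - 1) with hp
    have hres' := hres k hk e
    rw [← he, ← hp] at hres'
    have h1 : mm e e - mm p p ≤ 2 * mm (e - p) e := by
      have h0 := hmpos (e - p)
      have hs := hmsymm p e
      simp only [map_sub, LinearMap.sub_apply] at h0 ⊢
      linarith
    have h2 : ry k e ≤ ‖ry k‖ * ‖e‖ := by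
      calc ry k e ≤ |ry k e| := le_abs_self _
        _ = ‖ry k e‖ := rfl
        _ ≤ ‖ry k‖ * ‖e‖ := (ry k).le_opNorm e
    set B := ∑ i, ‖b i‖ * |eu k i| with hB
    have h3 : ∑ i, b i e * eu k i ≤ B * ‖e‖ := by
      rw [hB, Finset.sum_mul]
      apply Finset.sum_le_sum
      intro i _
      have habs : b i e * eu k i ≤ |b i e| * |eu k i| := by
        rw [← abs_mul]; exact le_abs_self _
      calc b i e * eu k i ≤ |b i e| * |eu k i| := habs
        _ ≤ ‖b i‖ * ‖e‖ * |eu k i| :=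
            mul_le_mul_of_nonneg_right ((b i).le_opNorm e) (abs_nonneg _)
        _ = ‖b i‖ * |eu k i| * ‖e‖ := by ring
    have hB2 : B ^ 2 ≤ (∑ i, ‖b i‖ ^ 2) * ∑ i, eu k i ^ 2 := by
      have := Finset.sum_mul_sq_le_sq_mul_sq Finset.univ (fun i => ‖b i‖)
        (fun i => |eu k i|)
      simpa [sq_abs] using this
    have h2' : 2 * τ * (ry k e) ≤ 2 * τ * (‖ry k‖ ^ 2 / α + α / 4 * ‖e‖ ^ 2) := by
      apply mul_le_mul_of_nonneg_left _ (by positivity)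
      exact le_trans h2 (young _ _)
    have h3' : 2 * τ * (∑ i, b i e * eu k i)
        ≤ 2 * τ * (((∑ i, ‖b i‖ ^ 2) * ∑ i, eu k i ^ 2) / α + α / 4 * ‖e‖ ^ 2) := by
      apply mul_le_mul_of_nonneg_left _ (by positivity)
      refine le_trans h3 (le_trans (young B ‖e‖) ?_)
      have hdiv : B ^ 2 / α ≤ ((∑ i, ‖b i‖ ^ 2) * ∑ i, eu k i ^ 2) / α :=
        (div_le_div_iff_of_pos_right hα).mpr hB2
      linarith
    have ha' : τ * (α * ‖e‖ ^ 2) ≤ τ * a e e :=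
      mul_le_mul_of_nonneg_left (ha e) hτ.le
    have key : 2 * ((mm (e - p)) e) = 2*τ*(ry k e) + 2*τ*(∑ i, b i e * eu k i) - 2*τ*(a e e) := by
      linarith
    ring_nf at h1 h2' h3' ha' key ⊢
    linarith
  -- the summed (telescoped) estimate
  have main : ∀ k, 1 ≤ k → k ≤ K →
      mm (ey k) (ey k) + τ * ∑ k' ∈ Finset.Icc 1 k, a (ey k') (ey k')
        ≤ (2 * τ / α) * ∑ k' ∈ Finset.Icc 1 k, ‖ry k'‖ ^ 2
          + (2 * τ / α) * ((∑ i, ‖b i‖ ^ 2) *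
              ∑ k' ∈ Finset.Icc 1 k, ∑ i, eu k' i ^ 2)
          + mm (ey 0) (ey 0) := by
    intro k hk1
    induction k, hk1 using Nat.le_induction with
    | base =>
      intro _
      have hstep := step 1 (Finset.mem_Icc.mpr ⟨le_refl 1, hK⟩)
      simp only [Finset.Icc_self, Finset.sum_singleton] at *
      norm_num at hstep
      linarith
    | succ n hn ih =>
      intro hnK
      have ihh := ih (by omega)
      have hstep := step (n + 1) (Finset.mem_Icc.mpr ⟨by omega, hnK⟩)
      simp only [Nat.add_sub_cancel] at hstep
      rw [Finset.sum_Icc_succ_top (by omega : 1 ≤ n + 1),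
        Finset.sum_Icc_succ_top (by omega : 1 ≤ n + 1),
        Finset.sum_Icc_succ_top (by omega : 1 ≤ n + 1)]
      ring_nf
      ring_nf at ihh hstep
      linarith
  intro k hk
  obtain ⟨hk1, hkK⟩ := Finset.mem_Icc.mp hk
  have hmain := main k hk1 hkK
  -- bound the control term by Δu ^ 2
  have hsub : ∑ k' ∈ Finset.Icc 1 k, ∑ i, eu k' i ^ 2
      ≤ ∑ k' ∈ Finset.Icc 1 K, ∑ i, eu k' i ^ 2 :=
    Finset.sum_le_sum_of_subset_of_nonneg (Finset.Icc_subset_Icc_right hkK)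
      (fun i _ _ => Finset.sum_nonneg fun j _ => sq_nonneg _)
  have hXK : τ * ∑ k' ∈ Finset.Icc 1 K, ∑ i, eu k' i ^ 2 ≤ Δu ^ 2 := by
    have h0 : (0:ℝ) ≤ τ * ∑ k' ∈ Finset.Icc 1 K, ∑ i, eu k' i ^ 2 := by
      have : (0:ℝ) ≤ ∑ k' ∈ Finset.Icc 1 K, ∑ i, eu k' i ^ 2 :=
        Finset.sum_nonneg fun i _ => Finset.sum_nonneg fun j _ => sq_nonneg _
      positivity
    calc τ * ∑ k' ∈ Finset.Icc 1 K, ∑ i, eu k' i ^ 2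
        = Real.sqrt (τ * ∑ k' ∈ Finset.Icc 1 K, ∑ i, eu k' i ^ 2) ^ 2 :=
          (Real.sq_sqrt h0).symm
      _ ≤ Δu ^ 2 := pow_le_pow_left₀ (Real.sqrt_nonneg _) hEu 2
  have hX : τ * ∑ k' ∈ Finset.Icc 1 k, ∑ i, eu k' i ^ 2 ≤ Δu ^ 2 :=
    le_trans (mul_le_mul_of_nonneg_left hsub hτ.le) hXK
  have hCb : (0:ℝ) ≤ ∑ i, ‖b i‖ ^ 2 :=
    Finset.sum_nonneg fun i _ => sq_nonneg _
  have hfin : (2 * τ / α) * ((∑ i, ‖b i‖ ^ 2) *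
        ∑ k' ∈ Finset.Icc 1 k, ∑ i, eu k' i ^ 2)
      ≤ (2 / α) * (∑ i, ‖b i‖ ^ 2) * Δu ^ 2 := by
    have h := mul_le_mul_of_nonneg_left hX
      (mul_nonneg (by positivity : (0:ℝ) ≤ 2 / α) hCb)
    calc (2 * τ / α) * ((∑ i, ‖b i‖ ^ 2) *
          ∑ k' ∈ Finset.Icc 1 k, ∑ i, eu k' i ^ 2)
        = (2 / α) * (∑ i, ‖b i‖ ^ 2) *
            (τ * ∑ k' ∈ Finset.Icc 1 k, ∑ i, eu k' i ^ 2) := by ring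
      _ ≤ (2 / α) * (∑ i, ‖b i‖ ^ 2) * Δu ^ 2 := h
  linarith
end

section
/- Assume the dual-weighted-residual estimate J* − J_N* ≤ (1/2)·( m(e_y^0, e_p^0) − τ·∑_{k=1}^{K} r_y^k(e_p^k) − τ·∑_{k=1}^{K} r_p^k(e_y^k) + τ·∑_{i=1}^{m} ∑_{k=1}^{K} r̃_{u,i}^k·(e_u^k)_i ) holds, where e_p^0 = e_p^1 and r̃_{u,i}^k are real numbers. Assume moreover the energy bounds m(e_p^1, e_p^1) + τ·∑_{k=1}^{K} a(e_p^k, e_p^k) ≤ (Δ_p*)², m(e_y^K, e_y^K) + τ·∑_{k=1}^{K} a(e_y^k, e_y^k) ≤ (Δ_y*)², and the control bound (τ·∑_{k=1}^{K} ‖e_u^k‖_{ℝ^m}²)^{1/2} ≤ Δ_u, with Δ_p*, Δ_y*, Δ_u ≥ 0. Then J* − J_N* ≤ (1/2)·( (m(e_y^0, e_y^0)^{1/2} + Δ_N^{y,K})·Δ_p* + Δ_N^{p,1}·Δ_y* + (τ·∑_{i=1}^{m} ∑_{k=1}^{K} |r̃_{u,i}^k|²)^{1/2}·Δ_u ), where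 Δ_N^{y,K} = ((τ/α)·∑_{k=1}^{K} ‖r_y^k‖_{Y'}²)^{1/2} and Δ_N^{p,1} = ((τ/α)·∑_{k=1}^{K} ‖r_p^k‖_{Y'}²)^{1/2}. -/
/-!
Each of the four terms of the dual-weighted-residual estimate is bounded by Cauchy–Schwarz:
the initial term in the semi-inner product `m`, the two residual terms by pairing
`‖r_k‖_{Y'} ‖e_k‖` and splitting the time step as `τ = √(τ/α) · √(τα)`, so that coercivity of
`a` turns the energy bounds into bounds on `τ α ∑ ‖e_k‖²`, and the control term in `ℝ^{m×K}`.
-/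

open Finset

lemma LinearMap.BilinForm.apply_le_sqrt_mul_sqrt {M : Type*} [AddCommGroup M] [Module ℝ M]
    (B : LinearMap.BilinForm ℝ M) (hs : ∀ x, 0 ≤ B x x) (hB : LinearMap.IsSymm B) (x y : M) :
    B x y ≤ √(B x x) * √(B y y) := by
  rw [← Real.sqrt_mul (hs x)]
  exact (le_abs_self _).trans (Real.abs_le_sqrt (B.apply_sq_le_of_symm hs hB x y))

lemma Real.mul_sum_mul_le_sqrt_mul_sqrt {ι : Type*} (s : Finset ι) (f g : ι → ℝ)
    {τ c d : ℝ} (hc : 0 ≤ c) (hcd : c * d = τ ^ 2) :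
    τ * ∑ i ∈ s, f i * g i ≤ √(c * ∑ i ∈ s, f i ^ 2) * √(d * ∑ i ∈ s, g i ^ 2) := by
  have hf : 0 ≤ c * ∑ i ∈ s, f i ^ 2 := by positivity
  have hsq : (τ * ∑ i ∈ s, f i * g i) ^ 2
      ≤ c * (∑ i ∈ s, f i ^ 2) * (d * ∑ i ∈ s, g i ^ 2) := by
    calc (τ * ∑ i ∈ s, f i * g i) ^ 2 = τ ^ 2 * (∑ i ∈ s, f i * g i) ^ 2 := by ring
      _ ≤ τ ^ 2 * ((∑ i ∈ s, f i ^ 2) * ∑ i ∈ s, g i ^ 2) := by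
          gcongr; exact sum_mul_sq_le_sq_mul_sq s f g
      _ = c * (∑ i ∈ s, f i ^ 2) * (d * ∑ i ∈ s, g i ^ 2) := by rw [← hcd]; ring
  rw [← Real.sqrt_mul hf]
  exact (le_abs_self _).trans (Real.abs_le_sqrt hsq)

lemma Real.mul_sum_sum_mul_le_sqrt_mul_sqrt {ι κ : Type*} (s : Finset ι) (t : Finset κ)
    (f : ι → κ → ℝ) (g : κ → ι → ℝ) {τ : ℝ} (hτ : 0 ≤ τ) :
    τ * ∑ i ∈ s, ∑ k ∈ t, f i k * g k i
      ≤ √(τ * ∑ i ∈ s, ∑ k ∈ t, f i k ^ 2) * √(τ * ∑ k ∈ t, ∑ i ∈ s, g k i ^ 2) := by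
  rw [sum_comm (s := t), ← sum_product' s t, ← sum_product' s t, ← sum_product' s t]
  exact Real.mul_sum_mul_le_sqrt_mul_sqrt _ _ _ hτ (sq τ).symm

lemma neg_mul_sum_apply_le_sqrt_mul {E ι : Type*} [SeminormedAddCommGroup E] [NormedSpace ℝ E]
    (s : Finset ι) (r : ι → StrongDual ℝ E) (e : ι → E) {τ α D : ℝ} (hτ : 0 ≤ τ) (hα : 0 < α)
    (hD : 0 ≤ D) (hE : τ * α * ∑ k ∈ s, ‖e k‖ ^ 2 ≤ D ^ 2) :
    -(τ * ∑ k ∈ s, r k (e k)) ≤ √(τ / α * ∑ k ∈ s, ‖r k‖ ^ 2) * D := by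
  have hpair : -(τ * ∑ k ∈ s, r k (e k)) ≤ τ * ∑ k ∈ s, ‖r k‖ * ‖e k‖ := by
    rw [← mul_neg, ← sum_neg_distrib]
    gcongr with k
    exact (neg_le_abs _).trans ((r k).le_opNorm (e k))
  have hcd : τ / α * (τ * α) = τ ^ 2 := by field_simp
  calc -(τ * ∑ k ∈ s, r k (e k))
      ≤ √(τ / α * ∑ k ∈ s, ‖r k‖ ^ 2) * √(τ * α * ∑ k ∈ s, ‖e k‖ ^ 2) :=
        hpair.trans (Real.mul_sum_mul_le_sqrt_mul_sqrt _ _ _ (by positivity) hcd)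
    _ ≤ √(τ / α * ∑ k ∈ s, ‖r k‖ ^ 2) * D := by
        gcongr; exact Real.sqrt_le_iff.2 ⟨hD, hE⟩

theorem cost_functional_error_bound_constrained_general
    {Y : Type*} [NormedAddCommGroup Y] [NormedSpace ℝ Y]
    {md K : ℕ} {τ α : ℝ} (hτ : 0 < τ) (hα : 0 < α)
    (a mm : Y →ₗ[ℝ] Y →ₗ[ℝ] ℝ)
    (ha : ∀ v : Y, α * ‖v‖ ^ 2 ≤ a v v)
    (hmsymm : ∀ v w : Y, mm v w = mm w v)
    (hmpos : ∀ v : Y, 0 ≤ mm v v)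
    (ey ep : ℕ → Y) (eu : ℕ → Fin md → ℝ)
    (ry rp : ℕ → Y →L[ℝ] ℝ) (rtu : Fin md → ℕ → ℝ)
    (Jstar JNstar Δp Δy Δu : ℝ)
    (hΔp : 0 ≤ Δp) (hΔy : 0 ≤ Δy)
    (hdwr : Jstar - JNstar ≤ (1 / 2) * (mm (ey 0) (ep 1)
      - τ * ∑ k ∈ Finset.Icc 1 K, ry k (ep k)
      - τ * ∑ k ∈ Finset.Icc 1 K, rp k (ey k)
      + τ * ∑ i, ∑ k ∈ Finset.Icc 1 K, rtu i k * eu k i))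
    (hEp : mm (ep 1) (ep 1) + τ * ∑ k ∈ Finset.Icc 1 K, a (ep k) (ep k) ≤ Δp ^ 2)
    (hEy : mm (ey K) (ey K) + τ * ∑ k ∈ Finset.Icc 1 K, a (ey k) (ey k) ≤ Δy ^ 2)
    (hEu : Real.sqrt (τ * ∑ k ∈ Finset.Icc 1 K, ∑ i, eu k i ^ 2) ≤ Δu) :
    Jstar - JNstar ≤ (1 / 2) *
      ((Real.sqrt (mm (ey 0) (ey 0))
          + Real.sqrt ((τ / α) * ∑ k ∈ Finset.Icc 1 K, ‖ry k‖ ^ 2)) * Δp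
        + Real.sqrt ((τ / α) * ∑ k ∈ Finset.Icc 1 K, ‖rp k‖ ^ 2) * Δy
        + Real.sqrt (τ * ∑ i, ∑ k ∈ Finset.Icc 1 K, (rtu i k) ^ 2) * Δu) := by
  have hcoer (e : ℕ → Y) : 0 ≤ τ * α * ∑ k ∈ Icc 1 K, ‖e k‖ ^ 2 ∧
      τ * α * ∑ k ∈ Icc 1 K, ‖e k‖ ^ 2 ≤ τ * ∑ k ∈ Icc 1 K, a (e k) (e k) := by
    refine ⟨by positivity, ?_⟩
    rw [mul_assoc, mul_sum]
    gcongr with k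
    exact ha (e k)
  have hinit : mm (ey 0) (ep 1) ≤ √(mm (ey 0) (ey 0)) * Δp := by
    refine (LinearMap.BilinForm.apply_le_sqrt_mul_sqrt mm hmpos ⟨hmsymm⟩ _ _).trans ?_
    gcongr
    exact Real.sqrt_le_iff.2 ⟨hΔp, by linarith [hcoer ep]⟩
  have hadj := neg_mul_sum_apply_le_sqrt_mul _ ry ep hτ.le hα hΔp
    (by linarith [hcoer ep, hmpos (ep 1)])
  have hstate := neg_mul_sum_apply_le_sqrt_mul _ rp ey hτ.le hα hΔy
    (by linarith [hcoer ey, hmpos (ey K)])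
  have hctrl := (Real.mul_sum_sum_mul_le_sqrt_mul_sqrt univ (Icc 1 K) rtu eu hτ.le).trans
    (mul_le_mul_of_nonneg_left hEu (Real.sqrt_nonneg _))
  linarith

/-- A posteriori cost functional error bound in the control-constrained case:
`J* − J_N* ≤ Δ_N^{J,*,c}`, derived from the dual-weighted-residual estimate and
the energy bounds on the state, adjoint and control errors. -/
theorem cost_functional_error_bound_constrained
    {Y : Type*} [NormedAddCommGroup Y] [NormedSpace ℝ Y]
    {md K : ℕ} (hK : 1 ≤ K) {τ α : ℝ} (hτ : 0 < τ) (hα : 0 < α)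
    (a mm : Y →ₗ[ℝ] Y →ₗ[ℝ] ℝ)
    (ha : ∀ v : Y, α * ‖v‖ ^ 2 ≤ a v v)
    (hmsymm : ∀ v w : Y, mm v w = mm w v)
    (hmpos : ∀ v : Y, 0 ≤ mm v v)
    (ey ep : ℕ → Y) (eu : ℕ → Fin md → ℝ)
    (ry rp : ℕ → Y →L[ℝ] ℝ) (rtu : Fin md → ℕ → ℝ)
    (Jstar JNstar Δp Δy Δu : ℝ)
    (hΔp : 0 ≤ Δp) (hΔy : 0 ≤ Δy) (hΔu : 0 ≤ Δu)
    (hdwr : Jstar - JNstar ≤ (1 / 2) * (mm (ey 0) (ep 1)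
      - τ * ∑ k ∈ Finset.Icc 1 K, ry k (ep k)
      - τ * ∑ k ∈ Finset.Icc 1 K, rp k (ey k)
      + τ * ∑ i, ∑ k ∈ Finset.Icc 1 K, rtu i k * eu k i))
    (hEp : mm (ep 1) (ep 1) + τ * ∑ k ∈ Finset.Icc 1 K, a (ep k) (ep k) ≤ Δp ^ 2)
    (hEy : mm (ey K) (ey K) + τ * ∑ k ∈ Finset.Icc 1 K, a (ey k) (ey k) ≤ Δy ^ 2)
    (hEu : Real.sqrt (τ * ∑ k ∈ Finset.Icc 1 K, ∑ i, eu k i ^ 2) ≤ Δu) :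
    Jstar - JNstar ≤ (1 / 2) *
      ((Real.sqrt (mm (ey 0) (ey 0))
          + Real.sqrt ((τ / α) * ∑ k ∈ Finset.Icc 1 K, ‖ry k‖ ^ 2)) * Δp
        + Real.sqrt ((τ / α) * ∑ k ∈ Finset.Icc 1 K, ‖rp k‖ ^ 2) * Δy
        + Real.sqrt (τ * ∑ i, ∑ k ∈ Finset.Icc 1 K, (rtu i k) ^ 2) * Δu) :=
  cost_functional_error_bound_constrained_general hτ hα a mm ha hmsymm hmpos ey ep eu ry rp rtu
    Jstar JNstar Δp Δy Δu hΔp hΔy hdwr hEp hEy hEu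
end

section
/- Let J₀ᶜ, J₀ᵘᶜ, J₀ᴺ, Δ₀, J₁ᶜ, J₁ᴺ, Δ₁, l be real numbers with l > 0, Δ₀ ≥ 0, Δ₁ ≥ 0, J₀ᶜ ≥ J₀ᵘᶜ, J₀ᵘᶜ ≥ J₀ᴺ − Δ₀, and J₁ᶜ − J₁ᴺ ≤ Δ₁. Define ω̃ = (J₀ᴺ − Δ₀ − J₁ᴺ − Δ₁)/l. If ω̃ > 0, then ω := min(ω̃, 1) satisfies 0 < ω ≤ 1 and J₀ᶜ ≥ J₁ᶜ + ω·l. -/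
/-- RB-MPC suboptimality/stability estimate in the control-constrained case: if the
reduced-basis suboptimality degree `ω̃ = (J₀ᴺ − Δ₀ − J₁ᴺ − Δ₁)/l` is positive, then
`ω = min(ω̃, 1)` lies in `(0,1]` and the relaxed dynamic programming inequality
`J₀ᶜ ≥ J₁ᶜ + ω·l` holds. -/
theorem rb_mpc_suboptimality_constrained
    (J0c J0uc J0N Δ0 J1c J1N Δ1 l : ℝ)
    (hl : 0 < l) (hΔ0 : 0 ≤ Δ0) (hΔ1 : 0 ≤ Δ1)
    (hcuc : J0c ≥ J0uc) (h0 : J0uc ≥ J0N - Δ0) (h1 : J1c - J1N ≤ Δ1)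
    (hω : 0 < (J0N - Δ0 - J1N - Δ1) / l) :
    0 < min ((J0N - Δ0 - J1N - Δ1) / l) 1 ∧
    min ((J0N - Δ0 - J1N - Δ1) / l) 1 ≤ 1 ∧
    J0c ≥ J1c + min ((J0N - Δ0 - J1N - Δ1) / l) 1 * l := by
  refine ⟨lt_min hω one_pos, min_le_right _ _, ?_⟩
  have hmin : min ((J0N - Δ0 - J1N - Δ1) / l) 1 * l ≤ (J0N - Δ0 - J1N - Δ1) / l * l :=
    mul_le_mul_of_nonneg_right (min_le_left _ _) hl.le
  have heq : (J0N - Δ0 - J1N - Δ1) / l * l = J0N - Δ0 - J1N - Δ1 :=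
    div_mul_cancel₀ _ hl.ne'
  nlinarith [hmin, heq]
end

section
/- Suppose e^0 = 0 and for every φ ∈ Y and k = 1, …, K the forward error equation m(e^k − e^{k−1}, φ) + τ·a(e^k, φ) = τ·r^k(φ) holds. Then for every k = 1, …, K one has the standard spatio-temporal energy error bound m(e^k, e^k) + τ·∑_{k'=1}^{k} a(e^{k'}, e^{k'}) ≤ (τ/α)·∑_{k'=1}^{k} ‖r^{k'}‖_{Y'}², i.e. ⦀e^k⦀_y ≤ Δ_N^{y,k} = ((τ/α)·∑_{k'=1}^{k} ‖r^{k'}‖_{Y'}²)^{1/2}. -/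
/-- Standard spatio-temporal energy error bound for a forward (backward-Euler)
discretized parabolic equation: `⦀e^k⦀_y ≤ Δ_N^{y,k}`. -/
theorem forward_energy_error_bound
    {Y : Type*} [NormedAddCommGroup Y] [NormedSpace ℝ Y]
    {K : ℕ} (hK : 1 ≤ K) {τ α : ℝ} (hτ : 0 < τ) (hα : 0 < α)
    (a mm : Y →ₗ[ℝ] Y →ₗ[ℝ] ℝ)
    (ha : ∀ v : Y, α * ‖v‖ ^ 2 ≤ a v v)
    (hmsymm : ∀ v w : Y, mm v w = mm w v)
    (hmpos : ∀ v : Y, 0 ≤ mm v v)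
    (e : ℕ → Y) (r : ℕ → Y →L[ℝ] ℝ)
    (he0 : e 0 = 0)
    (hres : ∀ k ∈ Finset.Icc 1 K, ∀ φ : Y,
      mm (e k - e (k - 1)) φ + τ * a (e k) φ = τ * r k φ) :
    ∀ k ∈ Finset.Icc 1 K,
      mm (e k) (e k) + τ * ∑ k' ∈ Finset.Icc 1 k, a (e k') (e k')
        ≤ (τ / α) * ∑ k' ∈ Finset.Icc 1 k, ‖r k'‖ ^ 2 := by
  -- one-step estimate
  have key : ∀ k ∈ Finset.Icc 1 K,
      mm (e k) (e k) + τ * a (e k) (e k)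
        ≤ mm (e (k-1)) (e (k-1)) + (τ/α) * ‖r k‖ ^ 2 := by
    intro k hk
    have h := hres k hk (e k)
    have hlin : mm (e k - e (k-1)) (e k)
        = mm (e k) (e k) - mm (e (k-1)) (e k) := by
      simp [map_sub]
    have hnn : 0 ≤ mm (e k) (e k) - 2 * mm (e (k-1)) (e k)
        + mm (e (k-1)) (e (k-1)) := by
      have h1 := hmpos (e k - e (k-1))
      have hs := hmsymm (e k) (e (k-1))
      simp only [map_sub, LinearMap.sub_apply] at h1
      linarith
    have hr : (r k) (e k) ≤ ‖r k‖ * ‖e k‖ :=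
      (le_abs_self _).trans (by simpa [Real.norm_eq_abs] using (r k).le_opNorm (e k))
    have hyoung : ‖r k‖ * ‖e k‖ ≤ ‖r k‖ ^ 2 / (2*α) + (α/2) * ‖e k‖ ^ 2 := by
      rw [div_add' _ _ _ (by positivity), le_div_iff₀ (by positivity)]
      nlinarith [sq_nonneg (‖r k‖ - α * ‖e k‖)]
    have hae := ha (e k)
    have hrtau : τ * (r k) (e k)
        ≤ τ * (‖r k‖ ^ 2 / (2*α)) + (τ/2) * a (e k) (e k) := by
      have h2 : (r k) (e k) ≤ ‖r k‖ ^ 2 / (2*α) + (1/2) * a (e k) (e k) := by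
        nlinarith
      nlinarith
    have hdiv : τ * (‖r k‖ ^ 2 / (2*α)) = (τ/α) * ‖r k‖ ^ 2 / 2 := by
      ring
    rw [hlin] at h
    nlinarith
  intro k hk
  obtain ⟨hk1, hkK⟩ := Finset.mem_Icc.mp hk
  clear hk
  induction k, hk1 using Nat.le_induction with
  | base =>
    have hb := key 1 (Finset.mem_Icc.mpr ⟨le_refl 1, hK⟩)
    simp only [Nat.sub_self, he0, map_zero, LinearMap.zero_apply] at hb
    simpa using hb
  | succ n hn ih =>
    have hnK : n ≤ K := le_trans (Nat.le_succ n) hkK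
    have ih' := ih hnK
    have hk' := key (n+1) (Finset.mem_Icc.mpr ⟨Nat.le_add_left 1 n, hkK⟩)
    simp only [Nat.add_sub_cancel] at hk'
    rw [Finset.sum_Icc_succ_top (Nat.le_add_left 1 n),
        Finset.sum_Icc_succ_top (Nat.le_add_left 1 n)]
    have := hmpos (e (n+1))
    linarith [mul_le_mul_of_nonneg_left (le_refl (0:ℝ)) hτ.le]
end

section
/- Suppose for every φ ∈ Y the backward error equations m(φ, e^k − e^{k+1}) + τ·a(φ, e^k) = τ·r^k(φ) for k = 1, …, K−1 and m(φ, e^K) + τ·a(φ, e^K) = τ·r^K(φ) hold. Then for every k = 1, …, K one has the standard spatio-temporal energy error bound m(e^k, e^k) + τ·∑_{k'=k}^{K} a(e^{k'}, e^{k'}) ≤ (τ/α)·∑_{k'=k}^{K} ‖r^{k'}‖_{Y'}², i.e. ⦀e^k⦀_p ≤ Δ_N^{p,k} = ((τ/α)·∑_{k'=k}^{K} ‖r^{k'}‖_{Y'}²)^{1/2}. -/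
/-- Standard spatio-temporal energy error bound for a backward-in-time (adjoint-type)
discretized parabolic equation: `⦀e^k⦀_p ≤ Δ_N^{p,k}`. -/
theorem backward_energy_error_bound
    {Y : Type*} [NormedAddCommGroup Y] [NormedSpace ℝ Y]
    {K : ℕ} (hK : 1 ≤ K) {τ α : ℝ} (hτ : 0 < τ) (hα : 0 < α)
    (a mm : Y →ₗ[ℝ] Y →ₗ[ℝ] ℝ)
    (ha : ∀ v : Y, α * ‖v‖ ^ 2 ≤ a v v)
    (hmsymm : ∀ v w : Y, mm v w = mm w v)
    (hmpos : ∀ v : Y, 0 ≤ mm v v)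
    (e : ℕ → Y) (r : ℕ → Y →L[ℝ] ℝ)
    (hres : ∀ k ∈ Finset.Icc 1 (K - 1), ∀ φ : Y,
      mm φ (e k - e (k + 1)) + τ * a φ (e k) = τ * r k φ)
    (hresK : ∀ φ : Y, mm φ (e K) + τ * a φ (e K) = τ * r K φ) :
    ∀ k ∈ Finset.Icc 1 K,
      mm (e k) (e k) + τ * ∑ k' ∈ Finset.Icc k K, a (e k') (e k')
        ≤ (τ / α) * ∑ k' ∈ Finset.Icc k K, ‖r k'‖ ^ 2 := by
  -- Cauchy–Schwarz-type bound for the nonnegative symmetric form mm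
  have hcs : ∀ v w : Y, 2 * mm v w ≤ mm v v + mm w w := by
    intro v w
    have h0 := hmpos (v - w)
    have hexp : mm (v - w) (v - w) = mm v v - 2 * mm v w + mm w w := by
      simp [map_sub, LinearMap.sub_apply, hmsymm v w]
      ring
    linarith [h0, hexp ▸ h0]
  -- dual pairing bound
  have hdual : ∀ k : ℕ, (r k) (e k) ≤ ‖r k‖ * ‖e k‖ := by
    intro k
    calc (r k) (e k) ≤ |(r k) (e k)| := le_abs_self _
      _ = ‖(r k) (e k)‖ := (Real.norm_eq_abs _).symm
      _ ≤ ‖r k‖ * ‖e k‖ := (r k).le_opNorm _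
  have key : ∀ d k : ℕ, k + d = K → 1 ≤ k →
      mm (e k) (e k) + τ * ∑ k' ∈ Finset.Icc k K, a (e k') (e k')
        ≤ (τ / α) * ∑ k' ∈ Finset.Icc k K, ‖r k'‖ ^ 2 := by
    intro d
    induction d with
    | zero =>
      intro k hk _
      simp only [Nat.add_zero] at hk
      subst hk
      rw [Finset.Icc_self, Finset.sum_singleton, Finset.sum_singleton]
      rw [div_mul_eq_mul_div, le_div_iff₀ hα]
      have heq := hresK (e k)
      have hd := hdual k
      have hsq := sq_nonneg (‖r k‖ - α * ‖e k‖)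
      have hak := ha (e k)
      have hmk := hmpos (e k)
      nlinarith [mul_pos hτ hα, sq_nonneg (‖e k‖)]
    | succ d ih =>
      intro k hk h1
      have hk1 : (k + 1) + d = K := by omega
      have hklt : k < K := by omega
      have ihk := ih (k + 1) hk1 (by omega)
      have hmem : k ∈ Finset.Icc 1 (K - 1) := by
        simp only [Finset.mem_Icc]; omega
      have heq := hres k hmem (e k)
      have heq' : mm (e k) (e k) - mm (e k) (e (k + 1)) + τ * a (e k) (e k)
          = τ * r k (e k) := by
        rw [← heq]; simp [map_sub]
      have hsplit : Finset.Icc k K = insert k (Finset.Icc (k + 1) K) := by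
        ext x
        simp only [Finset.mem_Icc, Finset.mem_insert]
        omega
      have hnot : k ∉ Finset.Icc (k + 1) K := by simp
      rw [hsplit, Finset.sum_insert hnot, Finset.sum_insert hnot]
      have hd := hdual k
      have hsq := sq_nonneg (‖r k‖ - α * ‖e k‖)
      have hak := ha (e k)
      have hmk := hmpos (e k)
      have hmk1 := hmpos (e (k + 1))
      have hcs1 := hcs (e k) (e (k + 1))
      -- from the error equation: mm(e k, e k) + τ a(e k, e k) ≤ mm(e k+1, e k+1) + (τ/α)‖r k‖²
      have hstep : mm (e k) (e k) + τ * a (e k) (e k)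
          ≤ mm (e (k + 1)) (e (k + 1)) + (τ / α) * ‖r k‖ ^ 2 := by
        rw [div_mul_eq_mul_div, ← sub_le_iff_le_add', le_div_iff₀ hα]
        nlinarith [mul_pos hτ hα]
      calc mm (e k) (e k) + τ * (a (e k) (e k) + ∑ k' ∈ Finset.Icc (k + 1) K, a (e k') (e k'))
          = (mm (e k) (e k) + τ * a (e k) (e k))
            + τ * ∑ k' ∈ Finset.Icc (k + 1) K, a (e k') (e k') := by ring
        _ ≤ (mm (e (k + 1)) (e (k + 1)) + (τ / α) * ‖r k‖ ^ 2)
            + τ * ∑ k' ∈ Finset.Icc (k + 1) K, a (e k') (e k') := by linarith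
        _ = (τ / α) * ‖r k‖ ^ 2
            + (mm (e (k + 1)) (e (k + 1))
              + τ * ∑ k' ∈ Finset.Icc (k + 1) K, a (e k') (e k')) := by ring
        _ ≤ (τ / α) * ‖r k‖ ^ 2 + (τ / α) * ∑ k' ∈ Finset.Icc (k + 1) K, ‖r k'‖ ^ 2 := by
            linarith
        _ = (τ / α) * (‖r k‖ ^ 2 + ∑ k' ∈ Finset.Icc (k + 1) K, ‖r k'‖ ^ 2) := by ring
  intro k hk
  rw [Finset.mem_Icc] at hk
  exact key (K - k) k (by omega) hk.1
end
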